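/- arXiv:2512.18867 — 8 statements merged into one kernel-verified Lean document; each statement's English description precedes it below -/
import Mathlib

section
/- Let X and Y be measurable spaces, let μ and ν be probability measures on X and Y respectively, and let ρ be a σ-finite measure on X×Y. Suppose β ∈ Π(μ,ν) satisfies dβ/dρ(x,y) = a(x)b(y) for ρ-a.e. (x,y), where a: X → (0,∞) and b: Y → (0,∞) are measurable with log a ∈ L¹(μ) and log b ∈ L¹(ν). Then for every α ∈ Π(μ,ν) with α ≪ ρ and H(α|ρ) finite, one has H(α|β) = H(α|ρ) − H(β|ρ). -/
open MeasureTheory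
open scoped Classical ENNReal

/-- Relative entropy (KL divergence) of `α` with respect to `β`, valued in `EReal`,
equal to `∫ log (dα/dβ) dα` when `α ≪ β` and this log-likelihood ratio is `α`-integrable,
and `⊤` otherwise. -/
noncomputable def relEnt {Ω : Type*} [MeasurableSpace Ω] (α β : Measure Ω) : EReal :=
  if α ≪ β ∧ Integrable (fun ω => Real.log ((α.rnDeriv β) ω).toReal) α
  then ((∫ ω, Real.log ((α.rnDeriv β) ω).toReal ∂α : ℝ) : EReal)
  else ⊤

/-- If the coupling `β ∈ Π(μ,ν)` has a product density `a(x)·b(y)` with respect to the σ-finite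
reference `ρ`, with `log a ∈ L¹(μ)` and `log b ∈ L¹(ν)`, then for every coupling
`α ∈ Π(μ,ν)` with `α ≪ ρ` and finite entropy `H(α|ρ)` one has
`H(α|β) = H(α|ρ) − H(β|ρ)`. -/
theorem stmt0 {X Y : Type*} [MeasurableSpace X] [MeasurableSpace Y]
    (μ : Measure X) (ν : Measure Y) [IsProbabilityMeasure μ] [IsProbabilityMeasure ν]
    (ρ : Measure (X × Y)) [SigmaFinite ρ]
    (a : X → ℝ) (b : Y → ℝ) (ha : Measurable a) (hb : Measurable b)
    (hapos : ∀ x, 0 < a x) (hbpos : ∀ y, 0 < b y)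
    (hloga : Integrable (fun x => Real.log (a x)) μ)
    (hlogb : Integrable (fun y => Real.log (b y)) ν)
    (β : Measure (X × Y)) [IsProbabilityMeasure β]
    (hβfst : β.fst = μ) (hβsnd : β.snd = ν)
    (hβρ : β = ρ.withDensity fun p => ENNReal.ofReal (a p.1 * b p.2))
    (α : Measure (X × Y)) [IsProbabilityMeasure α]
    (hαfst : α.fst = μ) (hαsnd : α.snd = ν)
    (hαρ : α ≪ ρ)
    (hαfin : Integrable (fun p => Real.log ((α.rnDeriv ρ) p).toReal) α) :
    relEnt α β = relEnt α ρ - relEnt β ρ := by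
  set f : X × Y → ℝ≥0∞ := fun p => ENNReal.ofReal (a p.1 * b p.2) with hfdef
  have habpos : ∀ p : X × Y, 0 < a p.1 * b p.2 := fun p => mul_pos (hapos _) (hbpos _)
  have hfmeas : Measurable f :=
    ((ha.comp measurable_fst).mul (hb.comp measurable_snd)).ennreal_ofReal
  have hfne0 : ∀ p, f p ≠ 0 := fun p => by
    simp [hfdef, ENNReal.ofReal_eq_zero, not_le, habpos p]
  have hfnetop : ∀ p, f p ≠ ∞ := fun p => ENNReal.ofReal_ne_top
  have hβac : β ≪ ρ := hβρ ▸ withDensity_absolutelyContinuous ρ f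
  have hρβ : ρ ≪ β := hβρ ▸ withDensity_absolutelyContinuous' hfmeas.aemeasurable
    (Filter.Eventually.of_forall hfne0)
  have hαβ : α ≪ β := hαρ.trans hρβ
  -- transfer of marginal integrals/integrability
  have hma : Measurable fun x => Real.log (a x) := Real.measurable_log.comp ha
  have hmb : Measurable fun y => Real.log (b y) := Real.measurable_log.comp hb
  have key : ∀ (γ : Measure (X × Y)), γ.fst = μ → γ.snd = ν →
      (Integrable (fun p : X × Y => Real.log (a p.1)) γ ∧
       Integrable (fun p : X × Y => Real.log (b p.2)) γ ∧
       ∫ p : X × Y, Real.log (a p.1) ∂γ = ∫ x, Real.log (a x) ∂μ ∧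
       ∫ p : X × Y, Real.log (b p.2) ∂γ = ∫ y, Real.log (b y) ∂ν) := by
    intro γ h1 h2
    have e1 : Integrable (fun p : X × Y => Real.log (a p.1)) γ := by
      have := hloga
      rw [← h1, Measure.fst,
        integrable_map_measure hma.aestronglyMeasurable measurable_fst.aemeasurable] at this
      exact this
    have e2 : Integrable (fun p : X × Y => Real.log (b p.2)) γ := by
      have := hlogb
      rw [← h2, Measure.snd,
        integrable_map_measure hmb.aestronglyMeasurable measurable_snd.aemeasurable] at this
      exact this
    refine ⟨e1, e2, ?_, ?_⟩
    · rw [← h1, Measure.fst, integral_map measurable_fst.aemeasurable hma.aestronglyMeasurable]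
    · rw [← h2, Measure.snd, integral_map measurable_snd.aemeasurable hmb.aestronglyMeasurable]
  obtain ⟨hαa, hαb, hαaI, hαbI⟩ := key α hαfst hαsnd
  obtain ⟨hβa, hβb, hβaI, hβbI⟩ := key β hβfst hβsnd
  -- relEnt β ρ
  have hβrn : β.rnDeriv ρ =ᵐ[ρ] f := hβρ ▸ Measure.rnDeriv_withDensity ρ hfmeas
  have hβlog : (fun p => Real.log ((β.rnDeriv ρ) p).toReal)
      =ᵐ[β] fun p => Real.log (a p.1) + Real.log (b p.2) := by
    filter_upwards [hβrn.filter_mono hβac.ae_le] with p hp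
    rw [hp]
    simp only [hfdef, ENNReal.toReal_ofReal (habpos p).le]
    exact Real.log_mul (hapos p.1).ne' (hbpos p.2).ne'
  have hβint : Integrable (fun p => Real.log ((β.rnDeriv ρ) p).toReal) β :=
    (hβa.add hβb).congr hβlog.symm
  have hβval : relEnt β ρ =
      ((∫ x, Real.log (a x) ∂μ + ∫ y, Real.log (b y) ∂ν : ℝ) : EReal) := by
    rw [relEnt, if_pos ⟨hβac, hβint⟩, integral_congr_ae hβlog, integral_add hβa hβb, hβaI, hβbI]
  -- relEnt α ρ
  have hαρval : relEnt α ρ = ((∫ p, Real.log ((α.rnDeriv ρ) p).toReal ∂α : ℝ) : EReal) := by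
    rw [relEnt, if_pos ⟨hαρ, hαfin⟩]
  -- relEnt α β
  have hrnαβ : α.rnDeriv β =ᵐ[ρ] fun p => (f p)⁻¹ * α.rnDeriv ρ p := by
    rw [hβρ]
    exact Measure.rnDeriv_withDensity_right α ρ hfmeas.aemeasurable
      (Filter.Eventually.of_forall hfne0) (Filter.Eventually.of_forall hfnetop)
  have hαlog : (fun p => Real.log ((α.rnDeriv β) p).toReal)
      =ᵐ[α] fun p => Real.log ((α.rnDeriv ρ) p).toReal
        - Real.log (a p.1) - Real.log (b p.2) := by
    filter_upwards [hrnαβ.filter_mono hαρ.ae_le, Measure.rnDeriv_pos hαρ,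
      (Measure.rnDeriv_lt_top α ρ).filter_mono hαρ.ae_le] with p hp hpos hlt
    rw [hp]
    have h1 : ((f p)⁻¹ * α.rnDeriv ρ p).toReal = (a p.1 * b p.2)⁻¹ * (α.rnDeriv ρ p).toReal := by
      rw [ENNReal.toReal_mul, ENNReal.toReal_inv, hfdef, ENNReal.toReal_ofReal (habpos p).le]
    rw [h1, Real.log_mul (inv_ne_zero (habpos p).ne')
        (ENNReal.toReal_pos hpos.ne' hlt.ne).ne',
      Real.log_inv, Real.log_mul (hapos p.1).ne' (hbpos p.2).ne']
    ring
  have hαβint : Integrable (fun p => Real.log ((α.rnDeriv β) p).toReal) α :=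
    ((hαfin.sub hαa).sub hαb).congr hαlog.symm
  have hαβval : relEnt α β =
      ((∫ p, Real.log ((α.rnDeriv ρ) p).toReal ∂α
        - ∫ x, Real.log (a x) ∂μ - ∫ y, Real.log (b y) ∂ν : ℝ) : EReal) := by
    rw [relEnt, if_pos ⟨hαβ, hαβint⟩, integral_congr_ae hαlog]
    have e1 : ∫ p : X × Y, (Real.log ((α.rnDeriv ρ) p).toReal - Real.log (a p.1)
        - Real.log (b p.2)) ∂α
        = ∫ p : X × Y, (Real.log ((α.rnDeriv ρ) p).toReal - Real.log (a p.1)) ∂α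
          - ∫ p : X × Y, Real.log (b p.2) ∂α := integral_sub (hαfin.sub hαa) hαb
    have e2 : ∫ p : X × Y, (Real.log ((α.rnDeriv ρ) p).toReal - Real.log (a p.1)) ∂α
        = ∫ p : X × Y, Real.log ((α.rnDeriv ρ) p).toReal ∂α
          - ∫ p : X × Y, Real.log (a p.1) ∂α := integral_sub hαfin hαa
    rw [e1, e2, hαaI, hαbI]
  rw [hαβval, hαρval, hβval, ← EReal.coe_sub]
  congr 1
  ring
end

section
/- Let μ and ν be probability measures on measurable spaces X and Y, and let α, β ∈ Π(μ,ν) be mutually absolutely continuous couplings such that log(dα/dβ)(x,y) = u(x) + v(y) + k(x,y) holds α-a.e. and β-a.e., where u ∈ L¹(μ), v ∈ L¹(ν), and k ∈ L¹(α) ∩ L¹(β). Then the symmetric relative entropy satisfies H(α|β) + H(β|α) = ∫ k dα − ∫ k dβ; in particular both relative entropies are finite. -/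
open MeasureTheory
open scoped Classical ENNReal

/-- If two mutually absolutely continuous couplings `α, β ∈ Π(μ,ν)` have a log-likelihood
ratio of the form `u(x) + v(y) + k(x,y)` with `u ∈ L¹(μ)`, `v ∈ L¹(ν)` and
`k ∈ L¹(α) ∩ L¹(β)`, then both relative entropies are finite and the symmetric relative
entropy equals `∫ k dα − ∫ k dβ`. -/
theorem stmt1 {X Y : Type*} [MeasurableSpace X] [MeasurableSpace Y]
    (μ : Measure X) (ν : Measure Y) [IsProbabilityMeasure μ] [IsProbabilityMeasure ν]
    (α β : Measure (X × Y)) [IsProbabilityMeasure α] [IsProbabilityMeasure β]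
    (hαfst : α.fst = μ) (hαsnd : α.snd = ν)
    (hβfst : β.fst = μ) (hβsnd : β.snd = ν)
    (hαβ : α ≪ β) (hβα : β ≪ α)
    (u : X → ℝ) (v : Y → ℝ) (k : X × Y → ℝ)
    (hu : Integrable u μ) (hv : Integrable v ν)
    (hkα : Integrable k α) (hkβ : Integrable k β)
    (heqα : ∀ᵐ p ∂α, Real.log ((α.rnDeriv β) p).toReal = u p.1 + v p.2 + k p)
    (heqβ : ∀ᵐ p ∂β, Real.log ((α.rnDeriv β) p).toReal = u p.1 + v p.2 + k p) :
    Integrable (fun p => Real.log ((α.rnDeriv β) p).toReal) α ∧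
    Integrable (fun p => Real.log ((β.rnDeriv α) p).toReal) β ∧
    relEnt α β + relEnt β α = (((∫ p, k p ∂α) - ∫ p, k p ∂β : ℝ) : EReal) := by
  classical
  -- integrability of the marginal terms
  have hufα : Integrable (fun p : X × Y => u p.1) α := by
    have h : Integrable u α.fst := hαfst ▸ hu
    exact h.comp_measurable measurable_fst
  have hvfα : Integrable (fun p : X × Y => v p.2) α := by
    have h : Integrable v α.snd := hαsnd ▸ hv
    exact h.comp_measurable measurable_snd
  have hufβ : Integrable (fun p : X × Y => u p.1) β := by
    have h : Integrable u β.fst := hβfst ▸ hu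
    exact h.comp_measurable measurable_fst
  have hvfβ : Integrable (fun p : X × Y => v p.2) β := by
    have h : Integrable v β.snd := hβsnd ▸ hv
    exact h.comp_measurable measurable_snd
  have hfα : Integrable (fun p : X × Y => u p.1 + v p.2 + k p) α :=
    (hufα.add hvfα).add hkα
  have hfβ : Integrable (fun p : X × Y => u p.1 + v p.2 + k p) β :=
    (hufβ.add hvfβ).add hkβ
  have hIα : Integrable (fun p => Real.log ((α.rnDeriv β) p).toReal) α :=
    hfα.congr (heqα.mono fun p hp => hp.symm)
  -- relation between the two log-densities, β-a.e.
  have hneg : ∀ᵐ p ∂β, Real.log ((β.rnDeriv α) p).toReal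
      = - Real.log ((α.rnDeriv β) p).toReal := by
    filter_upwards [Measure.inv_rnDeriv hβα] with p hp
    rw [← hp]
    simp [ENNReal.toReal_inv, Real.log_inv]
  have hIβ : Integrable (fun p => Real.log ((β.rnDeriv α) p).toReal) β := by
    refine (hfβ.neg.congr ?_)
    filter_upwards [hneg, heqβ] with p h1 h2
    simp [h1, h2]
  refine ⟨hIα, hIβ, ?_⟩
  have hα' : relEnt α β = ((∫ p, Real.log ((α.rnDeriv β) p).toReal ∂α : ℝ) : EReal) := by
    rw [relEnt, if_pos ⟨hαβ, hIα⟩]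
  have hβ' : relEnt β α = ((∫ p, Real.log ((β.rnDeriv α) p).toReal ∂β : ℝ) : EReal) := by
    rw [relEnt, if_pos ⟨hβα, hIβ⟩]
  rw [hα', hβ', ← EReal.coe_add]
  congr 1
  have e1 : ∫ p, Real.log ((α.rnDeriv β) p).toReal ∂α
      = (∫ p : X × Y, u p.1 ∂α) + (∫ p : X × Y, v p.2 ∂α) + ∫ p, k p ∂α := by
    rw [integral_congr_ae heqα]
    exact (integral_add (hufα.add hvfα) hkα).trans (by simp only [Pi.add_apply]; rw [integral_add hufα hvfα])
  have e2 : ∫ p, Real.log ((β.rnDeriv α) p).toReal ∂β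
      = -((∫ p : X × Y, u p.1 ∂β) + (∫ p : X × Y, v p.2 ∂β) + ∫ p, k p ∂β) := by
    rw [integral_congr_ae hneg, integral_neg, integral_congr_ae heqβ]
    exact congrArg Neg.neg ((integral_add (hufβ.add hvfβ) hkβ).trans
      (by simp only [Pi.add_apply]; rw [integral_add hufβ hvfβ]))
  have eu : (∫ p : X × Y, u p.1 ∂α) = ∫ p : X × Y, u p.1 ∂β := by
    have h1 : (∫ p : X × Y, u p.1 ∂α) = ∫ x, u x ∂α.fst := by
      rw [Measure.fst, integral_map measurable_fst.aemeasurable]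
      exact (hαfst ▸ hu : Integrable u α.fst).aestronglyMeasurable
    have h2 : (∫ p : X × Y, u p.1 ∂β) = ∫ x, u x ∂β.fst := by
      rw [Measure.fst, integral_map measurable_fst.aemeasurable]
      exact (hβfst ▸ hu : Integrable u β.fst).aestronglyMeasurable
    rw [h1, h2, hαfst, hβfst]
  have ev : (∫ p : X × Y, v p.2 ∂α) = ∫ p : X × Y, v p.2 ∂β := by
    have h1 : (∫ p : X × Y, v p.2 ∂α) = ∫ y, v y ∂α.snd := by
      rw [Measure.snd, integral_map measurable_snd.aemeasurable]
      exact (hαsnd ▸ hv : Integrable v α.snd).aestronglyMeasurable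
    have h2 : (∫ p : X × Y, v p.2 ∂β) = ∫ y, v y ∂β.snd := by
      rw [Measure.snd, integral_map measurable_snd.aemeasurable]
      exact (hβsnd ▸ hv : Integrable v β.snd).aestronglyMeasurable
    rw [h1, h2, hαsnd, hβsnd]
  rw [e1, e2, eu, ev]
  ring
end

section
/- Let α and β be probability measures on a measurable space with α ≪ β, and let A be a measurable set. Then α(A) ≤ H(α|β) + (1 + e/2)·β(A). -/
/-! Testing the density `dα/dβ` against `t · 1_A` in Fenchel's inequality
`x y ≤ x log x - x + e^y` and integrating against `β` gives
`t α(A) ≤ H(α|β) + (e^t - 1) β(A)`; the case `t = 1` suffices, as `e - 1 ≤ 1 + e/2`. -/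

open MeasureTheory
open scoped Classical ENNReal

open Real

lemma Real.mul_le_mul_log_sub_add_exp {x : ℝ} (hx : 0 ≤ x) (y : ℝ) :
    x * y ≤ x * log x - x + exp y := by
  rcases hx.eq_or_lt with rfl | hx
  · simpa using (exp_pos y).le
  · have h := mul_le_mul_of_nonneg_left (add_one_le_exp (y - log x)) hx.le
    rw [exp_sub, exp_log hx, mul_div_cancel₀ _ hx.ne'] at h
    linarith

section

variable {Ω : Type*} [MeasurableSpace Ω] {α β : Measure Ω}

lemma relEnt_eq_integral_llr (hαβ : α ≪ β) (hllr : Integrable (llr α β) α) :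
    relEnt α β = ((∫ ω, llr α β ω ∂α : ℝ) : EReal) := by
  rw [relEnt, if_pos ⟨hαβ, hllr⟩]
  rfl

lemma relEnt_of_not_integrable (hllr : ¬ Integrable (llr α β) α) : relEnt α β = ⊤ :=
  if_neg fun h => hllr h.2

lemma integral_le_integral_llr_sub_add_integral_exp [IsFiniteMeasure α] [SigmaFinite β]
    (hαβ : α ≪ β) (hllr : Integrable (llr α β) α) {g : Ω → ℝ} (hg : Integrable g α)
    (hexp : Integrable (fun ω => exp (g ω)) β) :
    ∫ ω, g ω ∂α ≤ ∫ ω, llr α β ω ∂α - α.real Set.univ + ∫ ω, exp (g ω) ∂β := by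
  set f : Ω → ℝ := fun ω => (α.rnDeriv β ω).toReal
  have hf : Integrable f β := Measure.integrable_toReal_rnDeriv
  have hf_llr : Integrable (fun ω => f ω * llr α β ω) β :=
    (integrable_toReal_rnDeriv_mul_iff hαβ).mpr hllr
  have hf_llr_sub : Integrable (fun ω => f ω * llr α β ω - f ω) β := hf_llr.sub hf
  calc ∫ ω, g ω ∂α = ∫ ω, f ω * g ω ∂β := (integral_toReal_rnDeriv_mul hαβ).symm
    _ ≤ ∫ ω, (f ω * llr α β ω - f ω + exp (g ω)) ∂β :=
        integral_mono ((integrable_toReal_rnDeriv_mul_iff hαβ).mpr hg)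
          (hf_llr_sub.add hexp)
          fun ω => mul_le_mul_log_sub_add_exp ENNReal.toReal_nonneg (g ω)
    _ = ∫ ω, llr α β ω ∂α - α.real Set.univ + ∫ ω, exp (g ω) ∂β := by
        rw [integral_add hf_llr_sub hexp, integral_sub hf_llr hf,
          integral_toReal_rnDeriv_mul hαβ, Measure.integral_toReal_rnDeriv hαβ]

lemma mul_measureReal_le_integral_llr_add [IsProbabilityMeasure α] [IsProbabilityMeasure β]
    (hαβ : α ≪ β) (hllr : Integrable (llr α β) α) {A : Set Ω} (hA : MeasurableSet A) (t : ℝ) :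
    t * α.real A ≤ ∫ ω, llr α β ω ∂α + (exp t - 1) * β.real A := by
  have hexp : (fun ω => exp (A.indicator (fun _ => t) ω))
      = fun ω => A.indicator (fun _ => exp t - 1) ω + 1 := by
    funext ω
    by_cases hω : ω ∈ A <;> simp [hω]
  have h := integral_le_integral_llr_sub_add_integral_exp (g := A.indicator fun _ => t) hαβ hllr
    ((integrable_const t).indicator hA)
    (by rw [hexp]; exact ((integrable_const _).indicator hA).add (integrable_const 1))
  rw [hexp, integral_add ((integrable_const _).indicator hA) (integrable_const 1),
    integral_indicator_const _ hA, integral_indicator_const _ hA] at h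
  simp only [smul_eq_mul, probReal_univ, integral_const] at h
  linarith

end

/-- For probability measures `α ≪ β` and any measurable set `A`,
`α(A) ≤ H(α|β) + (1 + e/2)·β(A)`. -/
theorem stmt2 {Ω : Type*} [MeasurableSpace Ω] (α β : Measure Ω)
    [IsProbabilityMeasure α] [IsProbabilityMeasure β] (hαβ : α ≪ β)
    (A : Set Ω) (hA : MeasurableSet A) :
    ((α A : ℝ≥0∞) : EReal)
      ≤ relEnt α β + ((1 + Real.exp 1 / 2 : ℝ) : EReal) * ((β A : ℝ≥0∞) : EReal) := by
  rw [← EReal.coe_ennreal_toReal (measure_ne_top α A),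
    ← EReal.coe_ennreal_toReal (measure_ne_top β A), ← EReal.coe_mul]
  by_cases hllr : Integrable (llr α β) α
  · rw [relEnt_eq_integral_llr hαβ hllr, ← EReal.coe_add, EReal.coe_le_coe_iff]
    have h := mul_measureReal_le_integral_llr_add hαβ hllr hA 1
    have he : (exp 1 - 1) * β.real A ≤ (1 + exp 1 / 2) * β.real A :=
      mul_le_mul_of_nonneg_right (by linarith [exp_one_lt_d9]) measureReal_nonneg
    change α.real A ≤ _ + _ * β.real A
    linarith
  · rw [relEnt_of_not_integrable hllr, EReal.top_add_coe]
    exact le_top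
end

section
/- Let (E,d) be a complete separable metric space, let μ be a probability measure on E with finite second moment, and let α, β ∈ Π(μ,μ) be couplings of μ with itself, with disintegrations (α_x)_{x∈E} and (β_x)_{x∈E} with respect to the first coordinate. Suppose there exists C > 0 such that for μ-a.e. x the measure β_x satisfies the Talagrand inequality W₂²(η, β_x) ≤ C·H(η|β_x) for every probability measure η on E. Then for every Lipschitz function ξ: E → ℝ one has ∫_E |∫ ξ dα_x − ∫ ξ dβ_x|² dμ(x) ≤ Lip(ξ)²·C·H(α|β). -/
open MeasureTheory ProbabilityTheory
open scoped Classical ENNReal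

/-- Squared 2-Wasserstein distance: infimum over couplings of the integrated squared
distance. -/
noncomputable def W2sq {X : Type*} [MeasurableSpace X] [PseudoMetricSpace X]
    (μ ν : Measure X) : ℝ≥0∞ :=
  ⨅ γ ∈ {γ : Measure (X × X) | γ.fst = μ ∧ γ.snd = ν},
    ∫⁻ p, ENNReal.ofReal (dist p.1 p.2 ^ 2) ∂γ

/-! For a coupling `γ` of `η` and `ν`, `|∫ ξ dη - ∫ ξ dν| ≤ K ∫ d dγ`, so by Jensen
`(∫ ξ dη - ∫ ξ dν)² ≤ K² W₂²(η, ν)`. Taking `η = α_x`, `ν = β_x` and applying Talagrand's inequality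
bounds the integrand by `K² C H(α_x | β_x)`. Finally `dα/dβ (x, y) = dα_x/dβ_x (y)`: the singular
part of `α_x` with respect to `β_x` yields a part of `α` singular to `β`. Hence
`H(α | β) = ∫ H(α_x | β_x) dμ(x)`, and integrating the pointwise bound gives the claim. -/

section RelativeEntropy

variable {Ω : Type*} [MeasurableSpace Ω] {α β : Measure Ω}

lemma relEnt_of_ac_of_integrable (hac : α ≪ β) (hint : Integrable (llr α β) α) :
    relEnt α β = ((∫ ω, llr α β ω ∂α : ℝ) : EReal) :=
  if_pos ⟨hac, hint⟩

lemma relEnt_ne_top_iff : relEnt α β ≠ ⊤ ↔ α ≪ β ∧ Integrable (llr α β) α := by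
  unfold relEnt
  split_ifs with h
  · exact iff_of_true (EReal.coe_ne_top _) h
  · exact iff_of_false (not_not.mpr rfl) h

lemma relEnt_nonneg [IsProbabilityMeasure α] [IsProbabilityMeasure β] : 0 ≤ relEnt α β := by
  by_cases h : relEnt α β = ⊤
  · simp [h]
  obtain ⟨hac, hint⟩ := relEnt_ne_top_iff.mp h
  have hgibbs := InformationTheory.integral_llr_add_sub_measure_univ_nonneg hac hint
  simp only [probReal_univ, add_sub_cancel_right] at hgibbs
  rw [relEnt_of_ac_of_integrable hac hint]
  exact_mod_cast hgibbs

end RelativeEntropy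

section CompProd

variable {X Y : Type*} [MeasurableSpace X] [MeasurableSpace Y]
  [MeasurableSpace.CountablyGenerated Y]

lemma rnDeriv_measure_compProd_right (μ : Measure X) [IsFiniteMeasure μ] (κ η : Kernel X Y)
    [IsFiniteKernel κ] [IsFiniteKernel η] :
    (μ ⊗ₘ κ).rnDeriv (μ ⊗ₘ η) =ᵐ[μ ⊗ₘ η] fun p => κ.rnDeriv η p.1 p.2 := by
  refine (Measure.eq_rnDeriv (Kernel.measurable_rnDeriv κ η)
    (Measure.MutuallySingular.compProd_of_right μ μ
      (.of_forall (Kernel.mutuallySingular_singularPart κ η))) ?_).symm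
  conv_lhs => rw [← κ.rnDeriv_add_singularPart η]
  rw [Measure.compProd_add_right, Measure.compProd_withDensity (Kernel.measurable_rnDeriv κ η),
    add_comm]

theorem exists_relEnt_compProd_eq_integral (μ : Measure X) [IsFiniteMeasure μ] (κ η : Kernel X Y)
    [IsFiniteKernel κ] [IsFiniteKernel η] (h : relEnt (μ ⊗ₘ κ) (μ ⊗ₘ η) ≠ ⊤) :
    ∃ g : X → ℝ, Integrable g μ ∧ (∀ᵐ x ∂μ, relEnt (κ x) (η x) = g x) ∧
      relEnt (μ ⊗ₘ κ) (μ ⊗ₘ η) = ((∫ x, g x ∂μ : ℝ) : EReal) := by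
  obtain ⟨hac, hint⟩ := relEnt_ne_top_iff.mp h
  set F : X × Y → ℝ := fun p => Real.log (κ.rnDeriv η p.1 p.2).toReal
  have hF : llr (μ ⊗ₘ κ) (μ ⊗ₘ η) =ᵐ[μ ⊗ₘ κ] F := by
    filter_upwards [hac.ae_le (rnDeriv_measure_compProd_right μ κ η)] with p hp
    simp only [llr, hp, F]
  have hFint : Integrable F (μ ⊗ₘ κ) := hint.congr hF
  obtain ⟨hFx, hFnorm⟩ := (Measure.integrable_compProd_iff hFint.1).mp hFint
  refine ⟨fun x => ∫ y, F (x, y) ∂κ x, ?_, ?_, ?_⟩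
  · refine hFnorm.mono' ?_ (.of_forall fun x => norm_integral_le_integral_norm _)
    exact (Real.measurable_log.comp (Kernel.measurable_rnDeriv κ η).ennreal_toReal
      ).stronglyMeasurable.integral_kernel_prod_right'.aestronglyMeasurable
  · filter_upwards [Measure.absolutelyContinuous_compProd_right_iff.mp hac, hFx]
      with x hacx hintx
    have hllr : llr (κ x) (η x) =ᵐ[κ x] fun y => F (x, y) := by
      filter_upwards [hacx.ae_le (Kernel.rnDeriv_eq_rnDeriv_measure (κ := κ) (η := η))] with y hy
      simp only [llr, hy, F]
    rw [relEnt_of_ac_of_integrable hacx (hintx.congr hllr.symm), integral_congr_ae hllr]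
  · rw [relEnt_of_ac_of_integrable hac hint, integral_congr_ae hF,
      Measure.integral_compProd hFint]

end CompProd

lemma sq_lintegral_le_lintegral_sq {Ω : Type*} [MeasurableSpace Ω] {μ : Measure Ω}
    [IsProbabilityMeasure μ] {f : Ω → ℝ≥0∞} (hf : AEMeasurable f μ) :
    (∫⁻ ω, f ω ∂μ) ^ 2 ≤ ∫⁻ ω, f ω ^ 2 ∂μ := by
  have hholder := ENNReal.lintegral_mul_le_Lp_mul_Lq μ Real.HolderConjugate.two_two hf
    (aemeasurable_const (b := (1 : ℝ≥0∞)))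
  simp only [Pi.mul_apply, mul_one, lintegral_const, measure_univ, ENNReal.rpow_two, one_pow,
    ENNReal.one_rpow] at hholder
  calc (∫⁻ ω, f ω ∂μ) ^ 2 ≤ ((∫⁻ ω, f ω ^ 2 ∂μ) ^ (1 / 2 : ℝ)) ^ 2 := by gcongr
    _ = ∫⁻ ω, f ω ^ 2 ∂μ := by
      rw [← ENNReal.rpow_two, ← ENNReal.rpow_mul]; norm_num

section Transport

variable {X : Type*} [MetricSpace X] [MeasurableSpace X] [OpensMeasurableSpace X]
  {K : NNReal} {ξ : X → ℝ}

lemma LipschitzWith.integrable_of_integrable_dist_sq {η : Measure X} [IsFiniteMeasure η]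
    (hξ : LipschitzWith K ξ) (o : X) (hmom : Integrable (fun y => dist y o ^ 2) η) :
    Integrable ξ η := by
  have hdist : Integrable (fun y => dist y o) η :=
    ((memLp_two_iff_integrable_sq (by fun_prop)).mpr hmom).integrable one_le_two
  refine ((integrable_const |ξ o|).add (hdist.const_mul K)).mono'
    hξ.continuous.aestronglyMeasurable (.of_forall fun y => ?_)
  have hlip := hξ.dist_le_mul y o
  rw [Real.dist_eq] at hlip
  show |ξ y| ≤ |ξ o| + K * dist y o
  linarith [abs_sub_abs_le_abs_sub (ξ y) (ξ o)]

variable [SecondCountableTopology X]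

lemma ofReal_sq_integral_sub_le_of_coupling {η ν : Measure X} {γ : Measure (X × X)}
    [IsProbabilityMeasure γ] (hfst : γ.fst = η) (hsnd : γ.snd = ν)
    (hη : Integrable ξ η) (hν : Integrable ξ ν) (hξ : LipschitzWith K ξ) :
    ENNReal.ofReal ((∫ z, ξ z ∂η - ∫ z, ξ z ∂ν) ^ 2)
      ≤ (K : ℝ≥0∞) ^ 2 * ∫⁻ p, ENNReal.ofReal (dist p.1 p.2 ^ 2) ∂γ := by
  subst hfst hsnd
  have hdiff : ∫ z, ξ z ∂γ.fst - ∫ z, ξ z ∂γ.snd = ∫ p, (ξ p.1 - ξ p.2) ∂γ := by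
    rw [Measure.fst, Measure.snd, integral_map measurable_fst.aemeasurable hη.1,
      integral_map measurable_snd.aemeasurable hν.1]
    exact (integral_sub (hη.comp_measurable measurable_fst)
      (hν.comp_measurable measurable_snd)).symm
  calc ENNReal.ofReal ((∫ z, ξ z ∂γ.fst - ∫ z, ξ z ∂γ.snd) ^ 2)
      = ‖∫ p, (ξ p.1 - ξ p.2) ∂γ‖ₑ ^ 2 := by
        rw [hdiff, Real.enorm_eq_ofReal_abs, ← ENNReal.ofReal_pow (abs_nonneg _), sq_abs]
    _ ≤ (∫⁻ p, ‖ξ p.1 - ξ p.2‖ₑ ∂γ) ^ 2 := by gcongr; exact enorm_integral_le_lintegral_enorm _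
    _ ≤ (∫⁻ p, K * edist p.1 p.2 ∂γ) ^ 2 := by
        gcongr with p
        rw [← edist_eq_enorm_sub]
        exact hξ p.1 p.2
    _ ≤ ∫⁻ p, (K * edist p.1 p.2) ^ 2 ∂γ := sq_lintegral_le_lintegral_sq (by fun_prop)
    _ = (K : ℝ≥0∞) ^ 2 * ∫⁻ p, ENNReal.ofReal (dist p.1 p.2 ^ 2) ∂γ := by
        simp_rw [mul_pow, edist_dist, ← ENNReal.ofReal_pow dist_nonneg]
        exact lintegral_const_mul' _ _ (by simp)

lemma ofReal_sq_integral_sub_le_mul_W2sq {η ν : Measure X} [IsProbabilityMeasure η]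
    [IsProbabilityMeasure ν] (hη : Integrable ξ η) (hν : Integrable ξ ν)
    (hξ : LipschitzWith K ξ) :
    ENNReal.ofReal ((∫ z, ξ z ∂η - ∫ z, ξ z ∂ν) ^ 2) ≤ (K : ℝ≥0∞) ^ 2 * W2sq η ν := by
  rcases eq_or_ne K 0 with rfl | hK
  · simpa using ofReal_sq_integral_sub_le_of_coupling (γ := η.prod ν) (by simp) (by simp) hη hν hξ
  have hK2 : (K : ℝ≥0∞) ^ 2 ≠ 0 := by simpa using hK
  simp_rw [W2sq, ENNReal.mul_iInf_of_ne hK2 (by simp)]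
  refine le_iInf₂ fun γ ⟨hfst, hsnd⟩ => ?_
  have : IsProbabilityMeasure γ := ⟨by rw [← Measure.fst_univ, hfst, measure_univ]⟩
  exact ofReal_sq_integral_sub_le_of_coupling hfst hsnd hη hν hξ

lemma ae_ofReal_sq_integral_sub_le_mul_W2sq {μ : Measure X} {κ η : Kernel X X}
    [IsMarkovKernel κ] [IsMarkovKernel η] (hξ : LipschitzWith K ξ) (o : X)
    (hmom : Integrable (fun y => dist y o ^ 2) μ) (hκ : κ ∘ₘ μ = μ) (hη : η ∘ₘ μ = μ) :
    ∀ᵐ x ∂μ, ENNReal.ofReal ((∫ z, ξ z ∂κ x - ∫ z, ξ z ∂η x) ^ 2)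
      ≤ (K : ℝ≥0∞) ^ 2 * W2sq (κ x) (η x) := by
  filter_upwards [Measure.ae_integrable_of_integrable_comp (hκ ▸ hmom),
    Measure.ae_integrable_of_integrable_comp (hη ▸ hmom)] with x hκx hηx
  exact ofReal_sq_integral_sub_le_mul_W2sq (hξ.integrable_of_integrable_dist_sq o hκx)
    (hξ.integrable_of_integrable_dist_sq o hηx) hξ

end Transport

lemma coe_lintegral_le_mul_integral_of_ae_le {Ω : Type*} [MeasurableSpace Ω] {μ : Measure Ω}
    {f : Ω → ℝ≥0∞} {g : Ω → ℝ} {c : ℝ} (hc : 0 ≤ c) (hg : Integrable g μ) (hg0 : 0 ≤ᵐ[μ] g)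
    (hfg : ∀ᵐ x ∂μ, f x ≤ ENNReal.ofReal (c * g x)) :
    ((∫⁻ x, f x ∂μ : ℝ≥0∞) : EReal) ≤ (c : EReal) * ((∫ x, g x ∂μ : ℝ) : EReal) := by
  calc ((∫⁻ x, f x ∂μ : ℝ≥0∞) : EReal)
      ≤ ((∫⁻ x, ENNReal.ofReal (c * g x) ∂μ : ℝ≥0∞) : EReal) :=
        EReal.coe_ennreal_le_coe_ennreal_iff.mpr (lintegral_mono_ae hfg)
    _ = ((c * ∫ x, g x ∂μ : ℝ) : EReal) := by
        rw [← ofReal_integral_eq_lintegral_ofReal (hg.const_mul c)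
            (hg0.mono fun x hx => mul_nonneg hc hx), integral_const_mul,
          EReal.coe_ennreal_ofReal, max_eq_left (mul_nonneg hc (integral_nonneg_of_ae hg0))]
    _ = (c : EReal) * ((∫ x, g x ∂μ : ℝ) : EReal) := EReal.coe_mul _ _

theorem stmt3_general {E : Type*} [MetricSpace E]
    [TopologicalSpace.SeparableSpace E] [MeasurableSpace E] [BorelSpace E]
    (μ : Measure E) [IsProbabilityMeasure μ]
    (o : E) (hmom : Integrable (fun x => dist x o ^ 2) μ)
    (α β : Measure (E × E))
    (κα κβ : Kernel E E) (hκα : IsMarkovKernel κα) (hκβ : IsMarkovKernel κβ)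
    (hαdis : α = μ.compProd κα) (hβdis : β = μ.compProd κβ)
    (hαsnd : α.snd = μ) (hβsnd : β.snd = μ)
    (C : ℝ) (hC : 0 < C)
    (hTal : ∀ᵐ x ∂μ, ∀ η : Measure E, IsProbabilityMeasure η →
      ((W2sq η (κβ x) : ℝ≥0∞) : EReal) ≤ ((C : ℝ) : EReal) * relEnt η (κβ x))
    (K : NNReal) (ξ : E → ℝ) (hξ : LipschitzWith K ξ) :
    ((∫⁻ x, ENNReal.ofReal (((∫ z, ξ z ∂(κα x)) - ∫ z, ξ z ∂(κβ x)) ^ 2) ∂μ : ℝ≥0∞) : EReal)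
      ≤ (((K : ℝ) ^ 2 * C : ℝ) : EReal) * relEnt α β := by
  have : SecondCountableTopology E := UniformSpace.secondCountable_of_separable E
  have hmean := ae_ofReal_sq_integral_sub_le_mul_W2sq (κ := κα) (η := κβ) hξ o hmom
    (by rwa [← Measure.snd_compProd, ← hαdis]) (by rwa [← Measure.snd_compProd, ← hβdis])
  rcases eq_or_ne K 0 with rfl | hK
  -- `0 * ⊤ = 0` in `EReal`, so here the right-hand side vanishes even if `relEnt α β = ⊤`.
  · have hzero : ∫⁻ x, ENNReal.ofReal ((∫ z, ξ z ∂κα x - ∫ z, ξ z ∂κβ x) ^ 2) ∂μ = 0 :=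
      nonpos_iff_eq_zero.mp ((lintegral_mono_ae hmean).trans_eq (by simp))
    simp [hzero]
  by_cases htop : relEnt α β = ⊤
  · rw [htop, EReal.mul_top_of_pos (EReal.coe_pos.mpr (by positivity))]
    exact le_top
  subst hαdis hβdis
  obtain ⟨g, hg, hgx, hrel⟩ := exists_relEnt_compProd_eq_integral μ κα κβ htop
  rw [hrel]
  refine coe_lintegral_le_mul_integral_of_ae_le (by positivity) hg
    (hgx.mono fun x hx => by exact_mod_cast hx ▸ relEnt_nonneg) ?_
  filter_upwards [hmean, hTal, hgx] with x hmeanx hTalx hrelx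
  have hTalκ := hTalx (κα x) inferInstance
  rw [hrelx, ← EReal.coe_mul] at hTalκ
  calc _ ≤ (K : ℝ≥0∞) ^ 2 * W2sq (κα x) (κβ x) := hmeanx
    _ ≤ (K : ℝ≥0∞) ^ 2 * ENNReal.ofReal (C * g x) := by
      gcongr
      simpa only [EReal.toENNReal_coe, EReal.real_coe_toENNReal]
        using EReal.toENNReal_le_toENNReal hTalκ
    _ = ENNReal.ofReal ((K : ℝ) ^ 2 * C * g x) := by
      rw [mul_assoc, ENNReal.ofReal_mul (p := (K : ℝ) ^ 2) (by positivity),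
        ENNReal.ofReal_pow K.coe_nonneg, ENNReal.ofReal_coe_nnreal]

/-- If the disintegrations `β_x` of the coupling `β ∈ Π(μ,μ)` satisfy a Talagrand
transport inequality with constant `C`, then for every Lipschitz `ξ`,
`∫ |∫ ξ dα_x − ∫ ξ dβ_x|² dμ ≤ Lip(ξ)²·C·H(α|β)`. -/
theorem stmt3 {E : Type*} [MetricSpace E] [CompleteSpace E]
    [TopologicalSpace.SeparableSpace E] [MeasurableSpace E] [BorelSpace E]
    (μ : Measure E) [IsProbabilityMeasure μ]
    (o : E) (hmom : Integrable (fun x => dist x o ^ 2) μ)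
    (α β : Measure (E × E)) [IsProbabilityMeasure α] [IsProbabilityMeasure β]
    (κα κβ : Kernel E E) (hκα : IsMarkovKernel κα) (hκβ : IsMarkovKernel κβ)
    (hαdis : α = μ.compProd κα) (hβdis : β = μ.compProd κβ)
    (hαsnd : α.snd = μ) (hβsnd : β.snd = μ)
    (C : ℝ) (hC : 0 < C)
    (hTal : ∀ᵐ x ∂μ, ∀ η : Measure E, IsProbabilityMeasure η →
      ((W2sq η (κβ x) : ℝ≥0∞) : EReal) ≤ ((C : ℝ) : EReal) * relEnt η (κβ x))
    (K : NNReal) (ξ : E → ℝ) (hξ : LipschitzWith K ξ) :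
    ((∫⁻ x, ENNReal.ofReal (((∫ z, ξ z ∂(κα x)) - ∫ z, ξ z ∂(κβ x)) ^ 2) ∂μ : ℝ≥0∞) : EReal)
      ≤ (((K : ℝ) ^ 2 * C : ℝ) : EReal) * relEnt α β :=
  stmt3_general μ o hmom α β κα κβ hκα hκβ hαdis hβdis hαsnd hβsnd C hC hTal K ξ hξ
end

section
/- Let (E,d) be a complete separable metric space and μ a probability measure on E with finite second moment. For each ε ∈ (0,ε₀) let α^ε, β^ε ∈ Π(μ,μ) with disintegrations (α^ε_x) and (β^ε_x) with respect to the first coordinate, and assume: (i) there are constants c(ε) > 0 with limsup_{ε↓0} c(ε)/ε < ∞ such that for μ-a.e. x, W₂²(η, β^ε_x) ≤ c(ε)·H(η|β^ε_x) for every probability measure η on E; (ii) H(α^ε|β^ε)/ε² → 0 as ε ↓ 0; (iii) (ξ_ε)_{ε>0} are Lipschitz functions on E with sup_{ε>0} √ε·Lip(ξ_ε) < ∞; (iv) ξ ∈ L²(μ) with ε⁻¹‖ξ_ε − ξ‖_{L²(μ)} → 0; (v) there is L ∈ L²(μ) with ε⁻¹(∫ ξ dβ^ε_x − ξ(x)) →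 L(x) in L²(μ) as ε ↓ 0. Then ε⁻¹(∫ ξ dα^ε_x − ξ(x)) → L(x) in L²(μ) as ε ↓ 0. -/
/-!
Write the quotient `ε⁻¹(∫ ξ dα^ε_x - ξ(x)) - L(x)` as the same quotient for `β^ε` plus
`ε⁻¹(P_α ξ - P_β ξ)`, where `P_α ξ (x) = ∫ ξ dα^ε_x`, and split
`P_α ξ - P_β ξ = P_α (ξ - ξ_ε) + (P_α ξ_ε - P_β ξ_ε) + P_β (ξ_ε - ξ)`.
Both couplings have second marginal `μ`, so by Jensen the outer terms are bounded in `L²(μ)` by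
`‖ξ_ε - ξ‖`. For the middle term, testing the Lipschitz function `ξ_ε` against couplings of
`α^ε_x` and `β^ε_x` and then using the Talagrand inequality gives
`|P_α ξ_ε - P_β ξ_ε|² ≤ Lip(ξ_ε)² W₂²(α^ε_x, β^ε_x) ≤ Lip(ξ_ε)² c(ε) H(α^ε_x | β^ε_x)`, and the
chain rule `∫ H(α^ε_x | β^ε_x) dμ ≤ H(α^ε | β^ε)` bounds its `L²` norm by
`(Lip(ξ_ε)² c(ε) H(α^ε | β^ε))^{1/2}`. Since `Lip(ξ_ε)² c(ε) = O(1)` and `H(α^ε | β^ε) = o(ε²)`,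
this is `o(ε)`.
-/

open MeasureTheory ProbabilityTheory Filter Topology
open scoped Classical ENNReal NNReal

open InformationTheory

section Kernel

variable {α β : Type*} {mα : MeasurableSpace α} {mβ : MeasurableSpace β}
  {μ : Measure α} [SFinite μ] {κ : Kernel α β} {ν : Measure β}

lemma ae_ae_of_ae_of_snd_compProd_eq [IsSFiniteKernel κ] (hν : (μ ⊗ₘ κ).snd = ν)
    {p : β → Prop} (h : ∀ᵐ y ∂ν, p y) : ∀ᵐ x ∂μ, ∀ᵐ y ∂κ x, p y := by
  subst hν
  exact Measure.ae_ae_of_ae_compProd (p := fun z => p z.2)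
    (ae_of_ae_map measurable_snd.aemeasurable h)

lemma MeasureTheory.Integrable.ae_integrable_kernel [IsSFiniteKernel κ]
    (hν : (μ ⊗ₘ κ).snd = ν) {f : β → ℝ} (hf : Integrable f ν) :
    ∀ᵐ x ∂μ, Integrable f (κ x) := by
  subst hν
  have hf' := hf.comp_measurable measurable_snd
  exact ((Measure.integrable_compProd_iff hf'.1).1 hf').1

lemma ae_integral_kernel_congr [IsSFiniteKernel κ] (hν : (μ ⊗ₘ κ).snd = ν) {f g : β → ℝ}
    (h : f =ᵐ[ν] g) : (fun x => ∫ y, f y ∂κ x) =ᵐ[μ] fun x => ∫ y, g y ∂κ x := by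
  filter_upwards [ae_ae_of_ae_of_snd_compProd_eq hν h] with x hx using integral_congr_ae hx

lemma MeasureTheory.AEStronglyMeasurable.integral_kernel [IsSFiniteKernel κ]
    (hν : (μ ⊗ₘ κ).snd = ν) {f : β → ℝ} (hf : AEStronglyMeasurable f ν) :
    AEStronglyMeasurable (fun x => ∫ y, f y ∂κ x) μ :=
  ((hf.stronglyMeasurable_mk.comp_measurable measurable_snd).integral_kernel_prod_right'
    |>.aestronglyMeasurable).congr (ae_integral_kernel_congr hν hf.ae_eq_mk).symm

lemma eLpNorm_integral_kernel_le [IsMarkovKernel κ] (hν : (μ ⊗ₘ κ).snd = ν) {p : ℝ≥0∞}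
    (hp1 : 1 ≤ p) (hp : p ≠ ∞) {f : β → ℝ} (hf : AEStronglyMeasurable f ν) :
    eLpNorm (fun x => ∫ y, f y ∂κ x) p μ ≤ eLpNorm f p ν := by
  have hp0 : p ≠ 0 := (lt_of_lt_of_le one_pos hp1).ne'
  have hpr : 0 < p.toReal := ENNReal.toReal_pos hp0 hp
  rw [eLpNorm_congr_ae (ae_integral_kernel_congr hν hf.ae_eq_mk), eLpNorm_congr_ae hf.ae_eq_mk,
    eLpNorm_eq_lintegral_rpow_enorm_toReal hp0 hp, eLpNorm_eq_lintegral_rpow_enorm_toReal hp0 hp]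
  set g := hf.mk f
  have hg : StronglyMeasurable g := hf.stronglyMeasurable_mk
  gcongr
  have jensen : ∀ x, ‖∫ y, g y ∂κ x‖ₑ ^ p.toReal ≤ ∫⁻ y, ‖g y‖ₑ ^ p.toReal ∂κ x := fun x => by
    calc ‖∫ y, g y ∂κ x‖ₑ ^ p.toReal ≤ eLpNorm g 1 (κ x) ^ p.toReal := by
          gcongr
          rw [eLpNorm_one_eq_lintegral_enorm]
          exact enorm_integral_le_lintegral_enorm g
      _ ≤ eLpNorm g p (κ x) ^ p.toReal := by
          gcongr
          exact eLpNorm_le_eLpNorm_of_exponent_le hp1 hg.aestronglyMeasurable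
      _ = ∫⁻ y, ‖g y‖ₑ ^ p.toReal ∂κ x := by
          rw [eLpNorm_eq_lintegral_rpow_enorm_toReal hp0 hp, ← ENNReal.rpow_mul,
            one_div_mul_cancel hpr.ne', ENNReal.rpow_one]
  calc ∫⁻ x, ‖∫ y, g y ∂κ x‖ₑ ^ p.toReal ∂μ ≤ ∫⁻ x, ∫⁻ y, ‖g y‖ₑ ^ p.toReal ∂κ x ∂μ :=
        lintegral_mono jensen
    _ = ∫⁻ y, ‖g y‖ₑ ^ p.toReal ∂ν := by
        rw [← hν, Measure.snd, lintegral_map (by fun_prop) measurable_snd,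
          Measure.lintegral_compProd (by fun_prop)]

end Kernel

lemma LipschitzWith.memLp {X : Type*} [PseudoMetricSpace X] [MeasurableSpace X]
    [OpensMeasurableSpace X] {μ : Measure X} [IsFiniteMeasure μ] {K : ℝ≥0} {f : X → ℝ}
    (hf : LipschitzWith K f) {p : ℝ≥0∞} (o : X) (ho : MemLp (fun x => dist x o) p μ) :
    MemLp f p μ := by
  refine ((memLp_const |f o|).add (ho.const_mul K)).of_le hf.continuous.aestronglyMeasurable
    (ae_of_all _ fun x => ?_)
  have := hf.dist_le_mul x o
  rw [Real.dist_eq] at this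
  simp only [Pi.add_apply, Real.norm_eq_abs]
  refine le_trans ?_ (le_abs_self _)
  linarith [abs_sub_abs_le_abs_sub (f x) (f o)]

lemma eLpNorm_two_pow_two {X : Type*} [MeasurableSpace X] (μ : Measure X) (f : X → ℝ) :
    eLpNorm f 2 μ ^ 2 = ∫⁻ x, ‖f x‖ₑ ^ 2 ∂μ := by
  simpa using eLpNorm_nnreal_pow_eq_lintegral (μ := μ) (f := f) (p := 2) two_ne_zero

lemma LipschitzWith.enorm_integral_fst_sub_integral_snd_sq_le {X : Type*} [PseudoMetricSpace X]
    [MeasurableSpace X] [OpensMeasurableSpace X] [SecondCountableTopology X]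
    {γ : Measure (X × X)} [IsProbabilityMeasure γ] {K : ℝ≥0} {f : X → ℝ}
    (hf : LipschitzWith K f) (h₁ : Integrable f γ.fst) (h₂ : Integrable f γ.snd) :
    ‖∫ x, f x ∂γ.fst - ∫ x, f x ∂γ.snd‖ₑ ^ 2 ≤
      (K : ℝ≥0∞) ^ 2 * ∫⁻ p, ENNReal.ofReal (dist p.1 p.2 ^ 2) ∂γ := by
  have hdiff : ∫ x, f x ∂γ.fst - ∫ x, f x ∂γ.snd = ∫ p, (f p.1 - f p.2) ∂γ := by
    rw [Measure.fst, Measure.snd,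
      integral_map measurable_fst.aemeasurable hf.continuous.aestronglyMeasurable,
      integral_map measurable_snd.aemeasurable hf.continuous.aestronglyMeasurable]
    exact (integral_sub (h₁.comp_measurable measurable_fst)
      (h₂.comp_measurable measurable_snd)).symm
  have hlip : ∀ p : X × X, ‖f p.1 - f p.2‖₊ ≤ K * ‖dist p.1 p.2‖₊ := fun p => by
    rw [← NNReal.coe_le_coe, NNReal.coe_mul, coe_nnnorm, coe_nnnorm,
      Real.norm_of_nonneg dist_nonneg, ← dist_eq_norm]
    exact hf.dist_le_mul p.1 p.2
  calc ‖∫ x, f x ∂γ.fst - ∫ x, f x ∂γ.snd‖ₑ ^ 2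
      ≤ eLpNorm (fun p : X × X => f p.1 - f p.2) 1 γ ^ 2 := by
        rw [hdiff, eLpNorm_one_eq_lintegral_enorm]
        gcongr
        exact enorm_integral_le_lintegral_enorm _
    _ ≤ eLpNorm (fun p : X × X => f p.1 - f p.2) 2 γ ^ 2 := by
        gcongr
        exact eLpNorm_le_eLpNorm_of_exponent_le one_le_two
          ((hf.continuous.comp continuous_fst).sub
            (hf.continuous.comp continuous_snd)).aestronglyMeasurable
    _ ≤ (K • eLpNorm (fun p : X × X => dist p.1 p.2) 2 γ) ^ 2 := by
        gcongr
        exact eLpNorm_le_nnreal_smul_eLpNorm_of_ae_le_mul (ae_of_all _ hlip) 2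
    _ = (K : ℝ≥0∞) ^ 2 * ∫⁻ p, ENNReal.ofReal (dist p.1 p.2 ^ 2) ∂γ := by
        rw [ENNReal.smul_def, smul_eq_mul, mul_pow, eLpNorm_two_pow_two]
        congr with p
        rw [Real.enorm_eq_ofReal_abs, ← ENNReal.ofReal_pow (abs_nonneg _), sq_abs]

lemma LipschitzWith.enorm_integral_sub_integral_sq_le_W2sq {X : Type*} [PseudoMetricSpace X]
    [MeasurableSpace X] [OpensMeasurableSpace X] [SecondCountableTopology X]
    {ν₁ ν₂ : Measure X} [IsProbabilityMeasure ν₁] [IsProbabilityMeasure ν₂]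
    {K : ℝ≥0} {f : X → ℝ} (hf : LipschitzWith K f) (h₁ : Integrable f ν₁)
    (h₂ : Integrable f ν₂) :
    ‖∫ x, f x ∂ν₁ - ∫ x, f x ∂ν₂‖ₑ ^ 2 ≤ (K : ℝ≥0∞) ^ 2 * W2sq ν₁ ν₂ := by
  set couplings := {γ : Measure (X × X) | γ.fst = ν₁ ∧ γ.snd = ν₂}
  have : Nonempty couplings := ⟨⟨ν₁.prod ν₂, by simp, by simp⟩⟩
  rw [W2sq, iInf_subtype' (p := (· ∈ couplings)), ENNReal.mul_iInf' (by simp) fun _ => this]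
  refine le_iInf fun ⟨γ, hγ₁, hγ₂⟩ => ?_
  subst hγ₁ hγ₂
  have : IsProbabilityMeasure γ :=
    @Measure.isProbabilityMeasure_of_map _ _ _ _ γ Prod.fst ‹IsProbabilityMeasure γ.fst›
  exact hf.enorm_integral_fst_sub_integral_snd_sq_le h₁ h₂

lemma relEnt_eq_klDiv {Ω : Type*} [MeasurableSpace Ω] {α β : Measure Ω} [IsFiniteMeasure α]
    [IsFiniteMeasure β] (h : α Set.univ = β Set.univ) : relEnt α β = klDiv α β := by
  rw [relEnt]
  split_ifs with hc
  · rw [← ENNReal.ofReal_toReal (klDiv_ne_top hc.1 hc.2), toReal_klDiv_of_measure_eq hc.1 h,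
      EReal.coe_ennreal_ofReal, max_eq_left]
    · rfl
    · exact (toReal_klDiv_of_measure_eq hc.1 h) ▸ ENNReal.toReal_nonneg
  · rw [klDiv_eq_top_iff.2 fun hac hint => hc ⟨hac, hint⟩, EReal.coe_ennreal_top]

lemma le_toNNReal_mul_klDiv_of_le_mul_relEnt {Ω : Type*} [MeasurableSpace Ω]
    {ν₁ ν₂ : Measure Ω} [IsFiniteMeasure ν₁] [IsFiniteMeasure ν₂] (h : ν₁ Set.univ = ν₂ Set.univ)
    {a : ℝ≥0∞} {c : ℝ} (hc : 0 ≤ c) (ha : (a : EReal) ≤ c * relEnt ν₁ ν₂) :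
    a ≤ c.toNNReal * klDiv ν₁ ν₂ := by
  rwa [relEnt_eq_klDiv h, ← max_eq_left hc, ← EReal.coe_ennreal_ofReal, ← EReal.coe_ennreal_mul,
    EReal.coe_ennreal_le_coe_ennreal_iff] at ha

section ChainRule

variable {α β : Type*} {mα : MeasurableSpace α} {mβ : MeasurableSpace β}
  [MeasurableSpace.CountableOrCountablyGenerated α β] {μ : Measure α} [IsFiniteMeasure μ]
  {κ η : Kernel α β}

lemma ae_rnDeriv_apply_ae_eq_rnDeriv_compProd [IsFiniteKernel κ] [IsFiniteKernel η]
    (h : μ ⊗ₘ κ ≪ μ ⊗ₘ η) :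
    ∀ᵐ x ∂μ, (κ x).rnDeriv (η x) =ᵐ[κ x] fun y => (μ ⊗ₘ κ).rnDeriv (μ ⊗ₘ η) (x, y) := by
  have hac : ∀ᵐ x ∂μ, κ x ≪ η x := h.kernel_of_compProd
  have hwd : μ ⊗ₘ κ = (μ ⊗ₘ η).withDensity (fun p => κ.rnDeriv η p.1 p.2) := by
    rw [← Measure.compProd_withDensity (Kernel.measurable_rnDeriv κ η)]
    exact Measure.compProd_congr (hac.mono fun x hx => (Kernel.withDensity_rnDeriv_eq hx).symm)
  have hjoint : (μ ⊗ₘ κ).rnDeriv (μ ⊗ₘ η) =ᵐ[μ ⊗ₘ κ] fun p => κ.rnDeriv η p.1 p.2 := by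
    have := Measure.rnDeriv_withDensity (μ ⊗ₘ η) (Kernel.measurable_rnDeriv κ η)
    rw [← hwd] at this
    exact h.ae_le this
  filter_upwards [Measure.ae_ae_of_ae_compProd hjoint, hac] with x hx hacx
  filter_upwards [hacx.ae_le (Kernel.rnDeriv_eq_rnDeriv_measure (κ := κ) (η := η)), hx] with y h1 h2
  rw [← h1, h2]

lemma lintegral_klDiv_le_klDiv_compProd [IsMarkovKernel κ] [IsMarkovKernel η] :
    ∫⁻ x, klDiv (κ x) (η x) ∂μ ≤ klDiv (μ ⊗ₘ κ) (μ ⊗ₘ η) := by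
  by_cases hfin : klDiv (μ ⊗ₘ κ) (μ ⊗ₘ η) = ∞
  · simp [hfin]
  obtain ⟨hac, hint⟩ := klDiv_ne_top_iff.1 hfin
  set F : α → ℝ := fun x => ∫ y, llr (μ ⊗ₘ κ) (μ ⊗ₘ η) (x, y) ∂κ x
  have hac_slice : ∀ᵐ x ∂μ, κ x ≪ η x := hac.kernel_of_compProd
  have hslice : ∀ᵐ x ∂μ, klDiv (κ x) (η x) ≠ ∞ ∧ (klDiv (κ x) (η x)).toReal = F x := by
    filter_upwards [ae_rnDeriv_apply_ae_eq_rnDeriv_compProd hac,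
      ((Measure.integrable_compProd_iff hint.1).1 hint).1, hac_slice] with x hx hint_x hac_x
    have hllr : llr (κ x) (η x) =ᵐ[κ x] fun y => llr (μ ⊗ₘ κ) (μ ⊗ₘ η) (x, y) :=
      hx.mono fun y hy => by simp only [llr, hy]
    exact ⟨klDiv_ne_top hac_x (hint_x.congr hllr.symm),
      (toReal_klDiv_of_measure_eq hac_x (by simp)).trans (integral_congr_ae hllr)⟩
  refine le_of_eq ?_
  calc ∫⁻ x, klDiv (κ x) (η x) ∂μ = ∫⁻ x, ENNReal.ofReal (F x) ∂μ :=
        lintegral_congr_ae <| hslice.mono fun x hx => by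
          dsimp only
          rw [← hx.2, ENNReal.ofReal_toReal hx.1]
    _ = ENNReal.ofReal (∫ p, llr (μ ⊗ₘ κ) (μ ⊗ₘ η) p ∂(μ ⊗ₘ κ)) := by
        rw [Measure.integral_compProd hint]
        exact (ofReal_integral_eq_lintegral_ofReal (f := F) hint.integral_compProd
          (hslice.mono fun x hx => hx.2 ▸ ENNReal.toReal_nonneg (a := klDiv (κ x) (η x)))).symm
    _ = klDiv (μ ⊗ₘ κ) (μ ⊗ₘ η) := by
        rw [← toReal_klDiv_of_measure_eq hac (by simp), ENNReal.ofReal_toReal hfin]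

end ChainRule

section Transfer

variable {E : Type*} [PseudoMetricSpace E] [SecondCountableTopology E] [MeasurableSpace E]
  [BorelSpace E] {μ : Measure E} [IsProbabilityMeasure μ] {κ η : Kernel E E}
  [IsMarkovKernel κ] [IsMarkovKernel η] {C K : ℝ≥0} {g : E → ℝ}

lemma eLpNorm_integral_sub_integral_le_of_lipschitz
    (hTal : ∀ᵐ x ∂μ, W2sq (κ x) (η x) ≤ C * klDiv (κ x) (η x)) (hg : LipschitzWith K g)
    (hgκ : ∀ᵐ x ∂μ, Integrable g (κ x)) (hgη : ∀ᵐ x ∂μ, Integrable g (η x)) :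
    eLpNorm (fun x => ∫ z, g z ∂κ x - ∫ z, g z ∂η x) 2 μ ≤
      ((K ^ 2 * C : ℝ≥0) * klDiv (μ ⊗ₘ κ) (μ ⊗ₘ η)) ^ (2⁻¹ : ℝ) := by
  rw [ENNReal.le_rpow_inv_iff two_pos, ENNReal.rpow_two, eLpNorm_two_pow_two]
  calc ∫⁻ x, ‖∫ z, g z ∂κ x - ∫ z, g z ∂η x‖ₑ ^ 2 ∂μ
      ≤ ∫⁻ x, (K ^ 2 * C : ℝ≥0) * klDiv (κ x) (η x) ∂μ := by
        refine lintegral_mono_ae ?_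
        filter_upwards [hTal, hgκ, hgη] with x hx hκx hηx
        calc ‖∫ z, g z ∂κ x - ∫ z, g z ∂η x‖ₑ ^ 2 ≤ (K : ℝ≥0∞) ^ 2 * W2sq (κ x) (η x) :=
              hg.enorm_integral_sub_integral_sq_le_W2sq hκx hηx
          _ ≤ (K : ℝ≥0∞) ^ 2 * (C * klDiv (κ x) (η x)) := by gcongr
          _ = (K ^ 2 * C : ℝ≥0) * klDiv (κ x) (η x) := by push_cast; ring
    _ = (K ^ 2 * C : ℝ≥0) * ∫⁻ x, klDiv (κ x) (η x) ∂μ :=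
        lintegral_const_mul' _ _ ENNReal.coe_ne_top
    _ ≤ (K ^ 2 * C : ℝ≥0) * klDiv (μ ⊗ₘ κ) (μ ⊗ₘ η) := by
        gcongr
        exact lintegral_klDiv_le_klDiv_compProd

lemma eLpNorm_integral_sub_integral_le (hκ : (μ ⊗ₘ κ).snd = μ) (hη : (μ ⊗ₘ η).snd = μ)
    (hTal : ∀ᵐ x ∂μ, W2sq (κ x) (η x) ≤ C * klDiv (κ x) (η x)) (hg : LipschitzWith K g)
    (hg2 : MemLp g 2 μ) {ξ : E → ℝ} (hξ : MemLp ξ 2 μ) :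
    eLpNorm (fun x => ∫ z, ξ z ∂κ x - ∫ z, ξ z ∂η x) 2 μ ≤
      2 * eLpNorm (fun x => g x - ξ x) 2 μ +
        ((K ^ 2 * C : ℝ≥0) * klDiv (μ ⊗ₘ κ) (μ ⊗ₘ η)) ^ (2⁻¹ : ℝ) := by
  have hξκ := (hξ.integrable one_le_two).ae_integrable_kernel hκ
  have hξη := (hξ.integrable one_le_two).ae_integrable_kernel hη
  have hgκ := (hg2.integrable one_le_two).ae_integrable_kernel hκ
  have hgη := (hg2.integrable one_le_two).ae_integrable_kernel hη
  have hsplit : (fun x => ∫ z, ξ z ∂κ x - ∫ z, ξ z ∂η x) =ᵐ[μ]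
      (fun x => ∫ z, ξ z - g z ∂κ x) +
        ((fun x => ∫ z, g z ∂κ x - ∫ z, g z ∂η x) + fun x => ∫ z, g z - ξ z ∂η x) := by
    filter_upwards [hξκ, hξη, hgκ, hgη] with x h₁ h₂ h₃ h₄
    simp only [Pi.add_apply, integral_sub h₁ h₃, integral_sub h₄ h₂]
    ring
  have hgm := hg.continuous.aestronglyMeasurable (μ := μ)
  have hΔ : AEStronglyMeasurable (fun x => ∫ z, g z ∂κ x - ∫ z, g z ∂η x) μ :=
    (AEStronglyMeasurable.integral_kernel hκ hgm).sub (AEStronglyMeasurable.integral_kernel hη hgm)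
  calc eLpNorm (fun x => ∫ z, ξ z ∂κ x - ∫ z, ξ z ∂η x) 2 μ
      ≤ eLpNorm (fun x => ∫ z, ξ z - g z ∂κ x) 2 μ +
          (eLpNorm (fun x => ∫ z, g z ∂κ x - ∫ z, g z ∂η x) 2 μ +
            eLpNorm (fun x => ∫ z, g z - ξ z ∂η x) 2 μ) := by
        have hξgκ : AEStronglyMeasurable (fun x => ∫ z, ξ z - g z ∂κ x) μ :=
          AEStronglyMeasurable.integral_kernel hκ (hξ.1.sub hgm)
        have hgξη : AEStronglyMeasurable (fun x => ∫ z, g z - ξ z ∂η x) μ :=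
          AEStronglyMeasurable.integral_kernel hη (hgm.sub hξ.1)
        rw [eLpNorm_congr_ae hsplit]
        refine (eLpNorm_add_le hξgκ (hΔ.add hgξη) one_le_two).trans ?_
        gcongr
        exact eLpNorm_add_le hΔ hgξη one_le_two
    _ ≤ eLpNorm (fun x => ξ x - g x) 2 μ +
          (((K ^ 2 * C : ℝ≥0) * klDiv (μ ⊗ₘ κ) (μ ⊗ₘ η)) ^ (2⁻¹ : ℝ) +
            eLpNorm (fun x => g x - ξ x) 2 μ) := by
        gcongr
        · exact eLpNorm_integral_kernel_le hκ one_le_two ENNReal.ofNat_ne_top (hξ.1.sub hgm)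
        · exact eLpNorm_integral_sub_integral_le_of_lipschitz hTal hg hgκ hgη
        · exact eLpNorm_integral_kernel_le hη one_le_two ENNReal.ofNat_ne_top (hgm.sub hξ.1)
    _ = 2 * eLpNorm (fun x => g x - ξ x) 2 μ +
          ((K ^ 2 * C : ℝ≥0) * klDiv (μ ⊗ₘ κ) (μ ⊗ₘ η)) ^ (2⁻¹ : ℝ) := by
        rw [show eLpNorm (fun x => ξ x - g x) 2 μ = eLpNorm (fun x => g x - ξ x) 2 μ from
          eLpNorm_sub_comm ξ g 2 μ]
        ring

lemma eLpNorm_generator_le {ε : ℝ} (hε : 0 < ε) (hκ : (μ ⊗ₘ κ).snd = μ)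
    (hη : (μ ⊗ₘ η).snd = μ) (hTal : ∀ᵐ x ∂μ, W2sq (κ x) (η x) ≤ C * klDiv (κ x) (η x))
    (hg : LipschitzWith K g) (hg2 : MemLp g 2 μ) {ξ : E → ℝ} (hξ : MemLp ξ 2 μ) {L : E → ℝ}
    (hL : AEStronglyMeasurable L μ) :
    eLpNorm (fun x => (∫ z, ξ z ∂κ x - ξ x) / ε - L x) 2 μ ≤
      eLpNorm (fun x => (∫ z, ξ z ∂η x - ξ x) / ε - L x) 2 μ +
        2 * (eLpNorm (fun x => g x - ξ x) 2 μ / ENNReal.ofReal ε) +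
        ((K ^ 2 * C : ℝ≥0) * klDiv (μ ⊗ₘ κ) (μ ⊗ₘ η)) ^ (2⁻¹ : ℝ) / ENNReal.ofReal ε := by
  have hsplit : (fun x => (∫ z, ξ z ∂κ x - ξ x) / ε - L x) =
      (fun x => (∫ z, ξ z ∂η x - ξ x) / ε - L x) +
        ε⁻¹ • fun x => ∫ z, ξ z ∂κ x - ∫ z, ξ z ∂η x := by
    ext x
    simp only [Pi.add_apply, Pi.smul_apply, smul_eq_mul]
    field_simp
    ring
  have hξm := hξ.1
  have hPκ := hξm.integral_kernel hκ
  have hPη := hξm.integral_kernel hη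
  rw [hsplit, add_assoc]
  refine (eLpNorm_add_le (by fun_prop) ((hPκ.sub hPη).const_smul _) one_le_two).trans ?_
  gcongr
  rw [eLpNorm_const_smul, Real.enorm_eq_ofReal (inv_nonneg.2 hε.le),
    ENNReal.ofReal_inv_of_pos hε]
  calc (ENNReal.ofReal ε)⁻¹ * eLpNorm (fun x => ∫ z, ξ z ∂κ x - ∫ z, ξ z ∂η x) 2 μ
      ≤ (ENNReal.ofReal ε)⁻¹ * (2 * eLpNorm (fun x => g x - ξ x) 2 μ +
          ((K ^ 2 * C : ℝ≥0) * klDiv (μ ⊗ₘ κ) (μ ⊗ₘ η)) ^ (2⁻¹ : ℝ)) := by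
        gcongr
        exact eLpNorm_integral_sub_integral_le hκ hη hTal hg hg2 hξ
    _ = _ := by
        simp only [ENNReal.div_eq_inv_mul]
        ring

end Transfer

lemma tendsto_div_sq_nhdsGT_zero {f : ℝ → ℝ≥0∞}
    (h : ∀ δ > (0 : ℝ), ∀ᶠ ε in 𝓝[>] (0 : ℝ), f ε ≤ ENNReal.ofReal (δ * ε ^ 2)) :
    Tendsto (fun ε => f ε / ENNReal.ofReal (ε ^ 2)) (𝓝[>] 0) (𝓝 0) := by
  rw [ENNReal.tendsto_nhds_zero]
  intro θ hθ
  obtain ⟨δ, -, hδ0, hδθ⟩ := ENNReal.lt_iff_exists_real_btwn.1 hθ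
  filter_upwards [h δ (ENNReal.ofReal_pos.1 hδ0)] with ε hε
  refine ENNReal.div_le_of_le_mul (hε.trans ?_)
  rw [ENNReal.ofReal_mul (ENNReal.ofReal_pos.1 hδ0).le]
  gcongr

lemma rpow_inv_two_div_ofReal_le {A B : ℝ≥0} (hAB : A ≤ B) (X : ℝ≥0∞) {ε : ℝ} (hε : 0 < ε) :
    ((A : ℝ≥0∞) * X) ^ (2⁻¹ : ℝ) / ENNReal.ofReal ε ≤
      ((B : ℝ≥0∞) * (X / ENNReal.ofReal (ε ^ 2))) ^ (2⁻¹ : ℝ) := by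
  have hε2 : ENNReal.ofReal ε = ENNReal.ofReal (ε ^ 2) ^ (2⁻¹ : ℝ) := by
    rw [ENNReal.ofReal_pow hε.le]
    exact_mod_cast (ENNReal.pow_rpow_inv_natCast two_ne_zero _).symm
  rw [hε2, ← ENNReal.div_rpow_of_nonneg _ _ (by norm_num), mul_div_assoc]
  gcongr

lemma sq_mul_toNNReal_le {ε c B₁ B₂ : ℝ} {K : ℝ≥0} (hε : 0 < ε) (hc : 0 ≤ c)
    (hcB : c / ε ≤ B₁) (hKB : √ε * K ≤ B₂) : K ^ 2 * c.toNNReal ≤ (B₂ ^ 2 * B₁).toNNReal := by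
  rw [← NNReal.coe_le_coe, NNReal.coe_mul, NNReal.coe_pow, Real.coe_toNNReal _ hc]
  refine le_trans ?_ (Real.le_coe_toNNReal _)
  have hKε : (K : ℝ) ^ 2 * ε ≤ B₂ ^ 2 := by
    have := pow_le_pow_left₀ (by positivity) hKB 2
    rwa [mul_pow, Real.sq_sqrt hε.le, mul_comm] at this
  have hB₁ : 0 ≤ B₁ := (div_nonneg hc hε.le).trans hcB
  calc (K : ℝ) ^ 2 * c ≤ (K : ℝ) ^ 2 * (B₁ * ε) := by
        gcongr
        exact (div_le_iff₀ hε).1 hcB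
    _ = B₁ * ((K : ℝ) ^ 2 * ε) := by ring
    _ ≤ B₁ * B₂ ^ 2 := by gcongr
    _ = B₂ ^ 2 * B₁ := mul_comm _ _

theorem stmt4_general {E : Type*} [MetricSpace E]
    [TopologicalSpace.SeparableSpace E] [MeasurableSpace E] [BorelSpace E]
    (μ : Measure E) [IsProbabilityMeasure μ]
    (o : E) (hmom : Integrable (fun x => dist x o ^ 2) μ)
    (ε₀ : ℝ) (hε₀ : 0 < ε₀)
    (α β : ℝ → Measure (E × E)) (κα κβ : ℝ → Kernel E E)
    (hcoup : ∀ ε ∈ Set.Ioo (0:ℝ) ε₀,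
      IsMarkovKernel (κα ε) ∧ α ε = μ.compProd (κα ε) ∧ (α ε).snd = μ ∧
      IsMarkovKernel (κβ ε) ∧ β ε = μ.compProd (κβ ε) ∧ (β ε).snd = μ)
    (c : ℝ → ℝ) (hcpos : ∀ ε ∈ Set.Ioo (0:ℝ) ε₀, 0 < c ε)
    (hclim : ∃ B : ℝ, ∀ᶠ ε in 𝓝[>] (0:ℝ), c ε / ε ≤ B)
    (hTal : ∀ ε ∈ Set.Ioo (0:ℝ) ε₀, ∀ᵐ x ∂μ, ∀ η : Measure E, IsProbabilityMeasure η →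
      ((W2sq η ((κβ ε) x) : ℝ≥0∞) : EReal) ≤ ((c ε : ℝ) : EReal) * relEnt η ((κβ ε) x))
    (hH : ∀ δ > (0:ℝ), ∀ᶠ ε in 𝓝[>] (0:ℝ),
      relEnt (α ε) (β ε) ≤ ((δ * ε ^ 2 : ℝ) : EReal))
    (K : ℝ → ℝ≥0) (ξε : ℝ → E → ℝ)
    (hLip : ∀ ε ∈ Set.Ioo (0:ℝ) ε₀, LipschitzWith (K ε) (ξε ε))
    (hsup : ∃ B : ℝ, ∀ ε ∈ Set.Ioo (0:ℝ) ε₀, Real.sqrt ε * (K ε : ℝ) ≤ B)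
    (ξ : E → ℝ) (hξ : MemLp ξ 2 μ)
    (happrox : Tendsto (fun ε => eLpNorm (fun x => ξε ε x - ξ x) 2 μ / ENNReal.ofReal ε)
      (𝓝[>] (0:ℝ)) (𝓝 0))
    (L : E → ℝ) (hL : MemLp L 2 μ)
    (hβgen : Tendsto
      (fun ε => eLpNorm (fun x => ((∫ z, ξ z ∂((κβ ε) x)) - ξ x) / ε - L x) 2 μ)
      (𝓝[>] (0:ℝ)) (𝓝 0)) :
    Tendsto
      (fun ε => eLpNorm (fun x => ((∫ z, ξ z ∂((κα ε) x)) - ξ x) / ε - L x) 2 μ)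
      (𝓝[>] (0:ℝ)) (𝓝 0) := by
  obtain ⟨B₁, hB₁⟩ := hclim
  obtain ⟨B₂, hB₂⟩ := hsup
  have hIoo : ∀ᶠ ε in 𝓝[>] (0:ℝ), ε ∈ Set.Ioo 0 ε₀ := Ioo_mem_nhdsGT hε₀
  have hdist : MemLp (fun x => dist x o) 2 μ :=
    (memLp_two_iff_integrable_sq (by fun_prop)).2 hmom
  have hKL : Tendsto (fun ε => klDiv (α ε) (β ε) / ENNReal.ofReal (ε ^ 2)) (𝓝[>] 0) (𝓝 0) := by
    refine tendsto_div_sq_nhdsGT_zero fun δ hδ => ?_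
    filter_upwards [hH δ hδ, hIoo] with ε hHε hε
    obtain ⟨_, hα, -, _, hβ, -⟩ := hcoup ε hε
    rw [hα, hβ, relEnt_eq_klDiv (by simp)] at hHε
    rwa [hα, hβ, ← EReal.coe_ennreal_le_coe_ennreal_iff, EReal.coe_ennreal_ofReal,
      max_eq_left (by positivity)]
  have hbound : Tendsto (fun ε =>
      eLpNorm (fun x => ((∫ z, ξ z ∂((κβ ε) x)) - ξ x) / ε - L x) 2 μ +
        2 * (eLpNorm (fun x => ξε ε x - ξ x) 2 μ / ENNReal.ofReal ε) +
        (((B₂ ^ 2 * B₁).toNNReal : ℝ≥0∞) * (klDiv (α ε) (β ε) / ENNReal.ofReal (ε ^ 2)))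
          ^ (2⁻¹ : ℝ)) (𝓝[>] 0) (𝓝 0) := by
    have h2 := ENNReal.Tendsto.const_mul (a := 2) happrox (Or.inr ENNReal.ofNat_ne_top)
    have hB := ENNReal.Tendsto.const_mul (a := (B₂ ^ 2 * B₁).toNNReal) hKL
      (Or.inr ENNReal.coe_ne_top)
    simpa [ENNReal.zero_rpow_of_pos (by norm_num : (0 : ℝ) < 2⁻¹)] using (hβgen.add h2).add
      ((ENNReal.continuous_rpow_const (y := 2⁻¹)).tendsto _ |>.comp hB)
  refine tendsto_of_tendsto_of_tendsto_of_le_of_le' tendsto_const_nhds hbound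
    (Eventually.of_forall fun _ => zero_le) ?_
  filter_upwards [hIoo, hB₁] with ε hε hcε
  obtain ⟨_, hα, hαsnd, _, hβ, hβsnd⟩ := hcoup ε hε
  rw [hα] at hαsnd ⊢
  rw [hβ] at hβsnd ⊢
  have hTalε : ∀ᵐ x ∂μ, W2sq (κα ε x) (κβ ε x) ≤ (c ε).toNNReal * klDiv (κα ε x) (κβ ε x) := by
    filter_upwards [hTal ε hε] with x hx
    exact le_toNNReal_mul_klDiv_of_le_mul_relEnt (by simp) (hcpos ε hε).le (hx _ inferInstance)
  refine (eLpNorm_generator_le hε.1 hαsnd hβsnd hTalε (hLip ε hε) ((hLip ε hε).memLp o hdist)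
    hξ hL.1).trans ?_
  gcongr
  exact rpow_inv_two_div_ofReal_le
    (sq_mul_toNNReal_le hε.1 (hcpos ε hε).le hcε (hB₂ ε hε)) _ hε.1

/-- Generator transfer for limits of Lipschitz functions: if the couplings `α^ε` approximate
the couplings `β^ε` at rate `o(ε²)` in relative entropy, the disintegrations of `β^ε` satisfy
Talagrand inequalities with constants `c(ε)` with `limsup c(ε)/ε < ∞`, `ξ_ε` are Lipschitz
with `sup √ε·Lip(ξ_ε) < ∞` and `ε⁻¹‖ξ_ε − ξ‖_{L²(μ)} → 0`, and
`ε⁻¹(∫ ξ dβ^ε_x − ξ(x)) → L` in `L²(μ)`, then also `ε⁻¹(∫ ξ dα^ε_x − ξ(x)) → L` in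
`L²(μ)`. -/
theorem stmt4 {E : Type*} [MetricSpace E] [CompleteSpace E]
    [TopologicalSpace.SeparableSpace E] [MeasurableSpace E] [BorelSpace E]
    (μ : Measure E) [IsProbabilityMeasure μ]
    (o : E) (hmom : Integrable (fun x => dist x o ^ 2) μ)
    (ε₀ : ℝ) (hε₀ : 0 < ε₀)
    (α β : ℝ → Measure (E × E)) (κα κβ : ℝ → Kernel E E)
    (hcoup : ∀ ε ∈ Set.Ioo (0:ℝ) ε₀,
      IsMarkovKernel (κα ε) ∧ α ε = μ.compProd (κα ε) ∧ (α ε).snd = μ ∧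
      IsMarkovKernel (κβ ε) ∧ β ε = μ.compProd (κβ ε) ∧ (β ε).snd = μ)
    (c : ℝ → ℝ) (hcpos : ∀ ε ∈ Set.Ioo (0:ℝ) ε₀, 0 < c ε)
    (hclim : ∃ B : ℝ, ∀ᶠ ε in 𝓝[>] (0:ℝ), c ε / ε ≤ B)
    (hTal : ∀ ε ∈ Set.Ioo (0:ℝ) ε₀, ∀ᵐ x ∂μ, ∀ η : Measure E, IsProbabilityMeasure η →
      ((W2sq η ((κβ ε) x) : ℝ≥0∞) : EReal) ≤ ((c ε : ℝ) : EReal) * relEnt η ((κβ ε) x))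
    (hH : ∀ δ > (0:ℝ), ∀ᶠ ε in 𝓝[>] (0:ℝ),
      relEnt (α ε) (β ε) ≤ ((δ * ε ^ 2 : ℝ) : EReal))
    (K : ℝ → ℝ≥0) (ξε : ℝ → E → ℝ)
    (hLip : ∀ ε ∈ Set.Ioo (0:ℝ) ε₀, LipschitzWith (K ε) (ξε ε))
    (hsup : ∃ B : ℝ, ∀ ε ∈ Set.Ioo (0:ℝ) ε₀, Real.sqrt ε * (K ε : ℝ) ≤ B)
    (ξ : E → ℝ) (hξ : MemLp ξ 2 μ)
    (happrox : Tendsto (fun ε => eLpNorm (fun x => ξε ε x - ξ x) 2 μ / ENNReal.ofReal ε)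
      (𝓝[>] (0:ℝ)) (𝓝 0))
    (L : E → ℝ) (hL : MemLp L 2 μ)
    (hβgen : Tendsto
      (fun ε => eLpNorm (fun x => ((∫ z, ξ z ∂((κβ ε) x)) - ξ x) / ε - L x) 2 μ)
      (𝓝[>] (0:ℝ)) (𝓝 0)) :
    Tendsto
      (fun ε => eLpNorm (fun x => ((∫ z, ξ z ∂((κα ε) x)) - ξ x) / ε - L x) 2 μ)
      (𝓝[>] (0:ℝ)) (𝓝 0) :=
  stmt4_general μ o hmom ε₀ hε₀ α β κα κβ hcoup c hcpos hclim hTal hH K ξε hLip hsup ξ hξ happrox L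
    hL hβgen
end

section
/- Let φ: ℝ^d → ℝ be differentiable and let ρ be a probability measure on ℝ^d with ∫(|φ| + ‖x‖² + ‖∇φ(x)‖² + |∇φ(x)·x|) dρ < ∞. Define the Bregman divergence D_φ[y|x] := φ(y) − φ(x) − ∇φ(x)·(y−x). Then for every coupling η ∈ Π(ρ,ρ) of ρ with itself one has ∫ ‖y − ∇φ(x)‖² dη(x,y) − 2 ∫ D_φ[y|x] dη(x,y) = ∫ ‖x − ∇φ(x)‖² dρ(x). In particular the left-hand side does not depend on the coupling η, so a coupling minimizes ∫‖y − ∇φ(x)‖² dη over Π(ρ,ρ) if and only if it minimizes ∫ D_φ[y|x] dη over Π(ρ,ρ). -/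
open MeasureTheory
open scoped RealInnerProductSpace

section aux

variable {d : ℕ}

local notation "E" => EuclideanSpace ℝ (Fin d)

lemma measurable_gradient' (φ : E → ℝ) : Measurable (gradient φ) := by
  have : gradient φ = fun x => (InnerProductSpace.toDual ℝ E).symm (fderiv ℝ φ x) := rfl
  rw [this]
  exact (InnerProductSpace.toDual ℝ E).symm.continuous.measurable.comp
    (measurable_fderiv ℝ φ)

lemma int_fst (ρ : Measure E) (η : Measure (E × E)) (hf : η.fst = ρ)
    {g : E → ℝ} (hg : StronglyMeasurable g) (hgi : Integrable g ρ) :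
    Integrable (fun p : E × E => g p.1) η ∧ ∫ p : E × E, g p.1 ∂η = ∫ x, g x ∂ρ := by
  have hmap : η.map Prod.fst = ρ := hf
  constructor
  · exact (integrable_map_measure hg.aestronglyMeasurable
      measurable_fst.aemeasurable).mp (hmap ▸ hgi)
  · rw [← hmap, integral_map measurable_fst.aemeasurable hg.aestronglyMeasurable]

lemma int_snd (ρ : Measure E) (η : Measure (E × E)) (hf : η.snd = ρ)
    {g : E → ℝ} (hg : StronglyMeasurable g) (hgi : Integrable g ρ) :
    Integrable (fun p : E × E => g p.2) η ∧ ∫ p : E × E, g p.2 ∂η = ∫ x, g x ∂ρ := by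
  have hmap : η.map Prod.snd = ρ := hf
  constructor
  · exact (integrable_map_measure hg.aestronglyMeasurable
      measurable_snd.aemeasurable).mp (hmap ▸ hgi)
  · rw [← hmap, integral_map measurable_snd.aemeasurable hg.aestronglyMeasurable]

end aux

/-- Bregman divergence identity: for every coupling `η ∈ Π(ρ,ρ)`,
`∫‖y − ∇φ(x)‖² dη − 2∫ D_φ[y|x] dη = ∫‖x − ∇φ(x)‖² dρ`; in particular a coupling
minimizes `∫‖y − ∇φ(x)‖² dη` over `Π(ρ,ρ)` iff it minimizes `∫ D_φ[y|x] dη`. -/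
theorem stmt12 (d : ℕ) (φ : EuclideanSpace ℝ (Fin d) → ℝ)
    (hφ : Differentiable ℝ φ)
    (ρ : Measure (EuclideanSpace ℝ (Fin d))) [IsProbabilityMeasure ρ]
    (h1 : Integrable φ ρ)
    (h2 : Integrable (fun x => ‖x‖ ^ 2) ρ)
    (h3 : Integrable (fun x => ‖gradient φ x‖ ^ 2) ρ)
    (h4 : Integrable (fun x => ⟪gradient φ x, x⟫) ρ) :
    (∀ η : Measure (EuclideanSpace ℝ (Fin d) × EuclideanSpace ℝ (Fin d)),
      IsProbabilityMeasure η → η.fst = ρ → η.snd = ρ →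
      (∫ p, ‖p.2 - gradient φ p.1‖ ^ 2 ∂η)
        - 2 * ∫ p, (φ p.2 - φ p.1 - ⟪gradient φ p.1, p.2 - p.1⟫) ∂η
        = ∫ x, ‖x - gradient φ x‖ ^ 2 ∂ρ) ∧
    (∀ η₀ : Measure (EuclideanSpace ℝ (Fin d) × EuclideanSpace ℝ (Fin d)),
      IsProbabilityMeasure η₀ → η₀.fst = ρ → η₀.snd = ρ →
      ((∀ η : Measure (EuclideanSpace ℝ (Fin d) × EuclideanSpace ℝ (Fin d)),
          IsProbabilityMeasure η → η.fst = ρ → η.snd = ρ →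
          (∫ p, ‖p.2 - gradient φ p.1‖ ^ 2 ∂η₀) ≤ ∫ p, ‖p.2 - gradient φ p.1‖ ^ 2 ∂η)
        ↔ (∀ η : Measure (EuclideanSpace ℝ (Fin d) × EuclideanSpace ℝ (Fin d)),
          IsProbabilityMeasure η → η.fst = ρ → η.snd = ρ →
          (∫ p, (φ p.2 - φ p.1 - ⟪gradient φ p.1, p.2 - p.1⟫) ∂η₀)
            ≤ ∫ p, (φ p.2 - φ p.1 - ⟪gradient φ p.1, p.2 - p.1⟫) ∂η))) := by
  have hgm : Measurable (gradient φ) := measurable_gradient' φ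
  have hφm : StronglyMeasurable φ := hφ.continuous.stronglyMeasurable
  have hnsq : StronglyMeasurable (fun x : EuclideanSpace ℝ (Fin d) => ‖x‖ ^ 2) :=
    (continuous_norm.pow 2).stronglyMeasurable
  have hgsqm : StronglyMeasurable (fun x => ‖gradient φ x‖ ^ 2) :=
    ((hgm.norm.pow measurable_const).stronglyMeasurable)
  have hgxm : StronglyMeasurable (fun x => ⟪gradient φ x, x⟫) :=
    (hgm.inner measurable_id).stronglyMeasurable
  have key : ∀ η : Measure (EuclideanSpace ℝ (Fin d) × EuclideanSpace ℝ (Fin d)),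
      IsProbabilityMeasure η → η.fst = ρ → η.snd = ρ →
      (∫ p, ‖p.2 - gradient φ p.1‖ ^ 2 ∂η)
        - 2 * ∫ p, (φ p.2 - φ p.1 - ⟪gradient φ p.1, p.2 - p.1⟫) ∂η
        = ∫ x, ‖x - gradient φ x‖ ^ 2 ∂ρ := by
    intro η _ hfst hsnd
    obtain ⟨iφ1, eφ1⟩ := int_fst ρ η hfst hφm h1
    obtain ⟨iφ2, eφ2⟩ := int_snd ρ η hsnd hφm h1
    obtain ⟨in2, en2⟩ := int_snd ρ η hsnd hnsq h2
    obtain ⟨ig1, eg1⟩ := int_fst ρ η hfst hgsqm h3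
    obtain ⟨igx, egx⟩ := int_fst ρ η hfst hgxm h4
    have hcrossm : StronglyMeasurable
        (fun p : EuclideanSpace ℝ (Fin d) × EuclideanSpace ℝ (Fin d) => ⟪gradient φ p.1, p.2⟫) :=
      ((hgm.comp measurable_fst).inner measurable_snd).stronglyMeasurable
    have icross : Integrable
        (fun p : EuclideanSpace ℝ (Fin d) × EuclideanSpace ℝ (Fin d) => ⟪gradient φ p.1, p.2⟫) η := by
      refine Integrable.mono' ((ig1.add in2).div_const 2) hcrossm.aestronglyMeasurable ?_
      filter_upwards with p
      have h := abs_real_inner_le_norm (gradient φ p.1) p.2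
      have h2' : ‖gradient φ p.1‖ * ‖p.2‖ ≤ (‖gradient φ p.1‖ ^ 2 + ‖p.2‖ ^ 2) / 2 := by
        nlinarith [sq_nonneg (‖gradient φ p.1‖ - ‖p.2‖)]
      simpa [Real.norm_eq_abs] using h.trans h2'
    have hA : Integrable
        (fun p : EuclideanSpace ℝ (Fin d) × EuclideanSpace ℝ (Fin d) => ‖p.2 - gradient φ p.1‖ ^ 2) η := by
      have heq : (fun p : EuclideanSpace ℝ (Fin d) × EuclideanSpace ℝ (Fin d) => ‖p.2 - gradient φ p.1‖ ^ 2)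
          = fun p => ‖p.2‖ ^ 2 - 2 * ⟪gradient φ p.1, p.2⟫ + ‖gradient φ p.1‖ ^ 2 := by
        funext p
        rw [norm_sub_sq_real, real_inner_comm]
      rw [heq]
      exact (in2.sub (icross.const_mul 2)).add ig1
    have hB : Integrable
        (fun p : EuclideanSpace ℝ (Fin d) × EuclideanSpace ℝ (Fin d) =>
          φ p.2 - φ p.1 - ⟪gradient φ p.1, p.2 - p.1⟫) η := by
      have heq : (fun p : EuclideanSpace ℝ (Fin d) × EuclideanSpace ℝ (Fin d) =>
            φ p.2 - φ p.1 - ⟪gradient φ p.1, p.2 - p.1⟫)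
          = fun p => φ p.2 - φ p.1 - (⟪gradient φ p.1, p.2⟫ - ⟪gradient φ p.1, p.1⟫) := by
        funext p; rw [inner_sub_right]
      rw [heq]
      exact (iφ2.sub iφ1).sub (icross.sub igx)
    rw [show (2:ℝ) * ∫ p, (φ p.2 - φ p.1 - ⟪gradient φ p.1, p.2 - p.1⟫) ∂η
        = ∫ p, 2 * (φ p.2 - φ p.1 - ⟪gradient φ p.1, p.2 - p.1⟫) ∂η from
        (integral_const_mul 2 _).symm,
      ← integral_sub hA (hB.const_mul 2)]
    have hpt : (fun p : EuclideanSpace ℝ (Fin d) × EuclideanSpace ℝ (Fin d) =>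
          ‖p.2 - gradient φ p.1‖ ^ 2 - 2 * (φ p.2 - φ p.1 - ⟪gradient φ p.1, p.2 - p.1⟫))
        = fun p => (‖p.2‖ ^ 2 - 2 * φ p.2)
            + (‖gradient φ p.1‖ ^ 2 + 2 * φ p.1 - 2 * ⟪gradient φ p.1, p.1⟫) := by
      funext p
      rw [norm_sub_sq_real, real_inner_comm, inner_sub_right]
      ring
    rw [hpt]
    have i1 : Integrable (fun p : EuclideanSpace ℝ (Fin d) × EuclideanSpace ℝ (Fin d) =>
        ‖p.2‖ ^ 2 - 2 * φ p.2) η := in2.sub (iφ2.const_mul 2)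
    have i2 : Integrable (fun p : EuclideanSpace ℝ (Fin d) × EuclideanSpace ℝ (Fin d) =>
        ‖gradient φ p.1‖ ^ 2 + 2 * φ p.1 - 2 * ⟪gradient φ p.1, p.1⟫) η :=
      (ig1.add (iφ1.const_mul 2)).sub (igx.const_mul 2)
    have i3 : Integrable (fun p : EuclideanSpace ℝ (Fin d) × EuclideanSpace ℝ (Fin d) =>
        ‖gradient φ p.1‖ ^ 2 + 2 * φ p.1) η := ig1.add (iφ1.const_mul 2)
    rw [integral_add i1 i2, integral_sub in2 (iφ2.const_mul 2),
      integral_sub i3 (igx.const_mul 2),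
      integral_add ig1 (iφ1.const_mul 2),
      integral_const_mul, integral_const_mul, integral_const_mul,
      eφ1, eφ2, en2, eg1, egx]
    have hrhs : (fun x : EuclideanSpace ℝ (Fin d) => ‖x - gradient φ x‖ ^ 2)
        = fun x => ‖x‖ ^ 2 - 2 * ⟪gradient φ x, x⟫ + ‖gradient φ x‖ ^ 2 := by
      funext x; rw [norm_sub_sq_real, real_inner_comm]
    have i4 : Integrable (fun x : EuclideanSpace ℝ (Fin d) =>
        ‖x‖ ^ 2 - 2 * ⟪gradient φ x, x⟫) ρ := h2.sub (h4.const_mul 2)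
    rw [hrhs, integral_add i4 h3,
      integral_sub h2 (h4.const_mul 2), integral_const_mul]
    ring
  refine ⟨key, ?_⟩
  intro η₀ p₀ f₀ s₀
  have k₀ := key η₀ p₀ f₀ s₀
  constructor
  · intro hmin η pη fη sη
    have k := key η pη fη sη
    have := hmin η pη fη sη
    linarith
  · intro hmin η pη fη sη
    have k := key η pη fη sη
    have := hmin η pη fη sη
    linarith
end

section
/- Let U₁, U₂ ∈ C²(ℝ^d), let μ₂ = e^{-U₂}·Leb be a probability measure on ℝ^d, and let μ₁ = e^{-U₁}·Leb (a positive Borel measure, not necessarily finite). Define the reciprocal characteristics 𝒰ᵢ := (1/8)‖∇Uᵢ‖² − (1/4)ΔUᵢ for i = 1,2. If ∫‖∇U₁ − ∇U₂‖² dμ₂ < ∞ and 𝒰₂ − 𝒰₁ ∈ L¹(μ₂), then ∫ (𝒰₂ − 𝒰₁) dμ₂ = −(1/8) ∫ ‖∇U₁ − ∇U₂‖² dμ₂. In particular, taking U₁ = 0: if ∫‖∇U₂‖² dμ₂ < ∞ and 𝒰₂ ∈ L¹(μ₂) then ∫ 𝒰₂ dμ₂ = −(1/8)∫‖∇U₂‖²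 dμ₂. -/
open MeasureTheory
open scoped RealInnerProductSpace

/-- `ℝ^d` with the Euclidean inner product and Lebesgue measure. -/
abbrev Euc (d : ℕ) := EuclideanSpace ℝ (Fin d)

/-- The Euclidean Laplacian of `f : ℝ^d → ℝ`, as the trace of the Hessian. -/
noncomputable def lap {d : ℕ} (f : Euc d → ℝ) (x : Euc d) : ℝ :=
  ∑ i, ⟪fderiv ℝ (gradient f) x (EuclideanSpace.single i (1:ℝ)),
        EuclideanSpace.single i (1:ℝ)⟫

/-- The reciprocal characteristic `𝒰 = (1/8)‖∇U‖² − (1/4)ΔU`. -/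
noncomputable def recipChar {d : ℕ} (U : Euc d → ℝ) (x : Euc d) : ℝ :=
  (1 / 8) * ‖gradient U x‖ ^ 2 - (1 / 4) * lap U x

/-! With `V = ∇U₂ - ∇U₁` one has pointwise
`𝒰₂ - 𝒰₁ = -(1/4) (div V - ⟪∇U₂, V⟫) - (1/8) ‖V‖²`, and
`e^{-U₂} (div V - ⟪∇U₂, V⟫) = div (e^{-U₂} V)`. So `div V - ⟪∇U₂, V⟫` has `μ₂`-integral zero:
integrate it by parts against the cutoffs `χ(x / (n + 1))`, whose gradients are `O(1/n)`, and let
`n → ∞`, which is legitimate because `V ∈ L²(μ₂) ⊆ L¹(μ₂)`. -/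

open Filter Topology

theorem ContDiff.gradient {F : Type*} [NormedAddCommGroup F] [InnerProductSpace ℝ F]
    [CompleteSpace F] {f : F → ℝ} {m n : WithTop ℕ∞} (hf : ContDiff ℝ n f) (hmn : m + 1 ≤ n) :
    ContDiff ℝ m (gradient f) :=
  (InnerProductSpace.toDual ℝ F).symm.contDiff.comp (hf.fderiv_right hmn)

theorem integral_withDensity_exp_neg {X : Type*} [MeasurableSpace X] {μ : Measure X}
    {U : X → ℝ} (hU : Measurable U) (f : X → ℝ) :
    ∫ x, f x ∂μ.withDensity (fun x => ENNReal.ofReal (Real.exp (-U x)))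
      = ∫ x, Real.exp (-U x) * f x ∂μ := by
  rw [integral_withDensity_eq_integral_toReal_smul (by fun_prop)
    (ae_of_all _ fun _ => ENNReal.ofReal_lt_top)]
  simp [ENNReal.toReal_ofReal (Real.exp_pos _).le]

section Divergence

variable {ι : Type*} [Fintype ι]

theorem fderiv_apply_coord {V : EuclideanSpace ℝ ι → EuclideanSpace ℝ ι}
    {x : EuclideanSpace ℝ ι} (hV : DifferentiableAt ℝ V x) (i : ι) (v : EuclideanSpace ℝ ι) :
    fderiv ℝ (fun y => V y i) x v = fderiv ℝ V x v i := by
  have h := ((EuclideanSpace.proj (𝕜 := ℝ) i).hasFDerivAt.comp x hV.hasFDerivAt).fderiv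
  exact congr($h v)

variable [DecidableEq ι]

local notation "e" i => EuclideanSpace.single i (1 : ℝ)

noncomputable def divergence (V : EuclideanSpace ℝ ι → EuclideanSpace ℝ ι)
    (x : EuclideanSpace ℝ ι) : ℝ :=
  ∑ i, ⟪fderiv ℝ V x (e i), e i⟫

theorem lap_eq_divergence_gradient {d : ℕ} (f : Euc d → ℝ) :
    lap f = divergence (gradient f) := rfl

theorem divergence_sub {V W : EuclideanSpace ℝ ι → EuclideanSpace ℝ ι} {x : EuclideanSpace ℝ ι}
    (hV : DifferentiableAt ℝ V x) (hW : DifferentiableAt ℝ W x) :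
    divergence (V - W) x = divergence V x - divergence W x := by
  simp only [divergence, fderiv_sub hV hW, FunLike.coe_sub, Pi.sub_apply, inner_sub_left,
    Finset.sum_sub_distrib]

theorem continuous_divergence {V : EuclideanSpace ℝ ι → EuclideanSpace ℝ ι}
    (hV : ContDiff ℝ 1 V) : Continuous (divergence V) :=
  continuous_finsetSum _ fun _ _ =>
    ((hV.continuous_fderiv one_ne_zero).clm_apply continuous_const).inner continuous_const

theorem EuclideanSpace.clm_apply_eq_sum (L : EuclideanSpace ℝ ι →L[ℝ] ℝ)
    (v : EuclideanSpace ℝ ι) : L v = ∑ i, L (e i) * v i := by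
  conv_lhs => rw [← (EuclideanSpace.basisFun ι ℝ).sum_repr v]
  simp [mul_comm]

theorem divergence_eq_sum_fderiv_apply {V : EuclideanSpace ℝ ι → EuclideanSpace ℝ ι}
    {x : EuclideanSpace ℝ ι} (hV : DifferentiableAt ℝ V x) :
    divergence V x = ∑ i, fderiv ℝ (fun y => V y i) x (e i) := by
  simp [divergence, fderiv_apply_coord hV, EuclideanSpace.inner_single_right]

theorem integral_mul_divergence_eq_neg {ψ : EuclideanSpace ℝ ι → ℝ}
    {V : EuclideanSpace ℝ ι → EuclideanSpace ℝ ι} (hψ : ContDiff ℝ 1 ψ)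
    (hψc : HasCompactSupport ψ) (hV : ContDiff ℝ 1 V) :
    ∫ x, ψ x * divergence V x = -∫ x, fderiv ℝ ψ x (V x) := by
  have hVi (i : ι) : ContDiff ℝ 1 fun y => V y i :=
    (EuclideanSpace.proj (𝕜 := ℝ) i).contDiff.comp hV
  have hdψ (i : ι) : Continuous fun x => fderiv ℝ ψ x (e i) :=
    (hψ.continuous_fderiv one_ne_zero).clm_apply continuous_const
  have hdV (i : ι) : Continuous fun x => fderiv ℝ (fun y => V y i) x (e i) :=
    ((hVi i).continuous_fderiv one_ne_zero).clm_apply continuous_const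
  have hint_left (i : ι) : Integrable fun x => ψ x * fderiv ℝ (fun y => V y i) x (e i) :=
    (hψ.continuous.mul (hdV i)).integrable_of_hasCompactSupport hψc.mul_right
  have hint_right (i : ι) : Integrable fun x => fderiv ℝ ψ x (e i) * V x i :=
    ((hdψ i).mul (hVi i).continuous).integrable_of_hasCompactSupport
      (hψc.fderiv_apply ℝ (e i)).mul_right
  have hcoord (i : ι) :
      ∫ x, ψ x * fderiv ℝ (fun y => V y i) x (e i) = -∫ x, fderiv ℝ ψ x (e i) * V x i :=
    integral_mul_fderiv_eq_neg_fderiv_mul_of_integrable (hint_right i) (hint_left i)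
      ((hψ.continuous.mul (hVi i).continuous).integrable_of_hasCompactSupport hψc.mul_right)
      (fun x _ => hψ.differentiable one_ne_zero x)
      (fun x _ => (hVi i).differentiable one_ne_zero x)
  calc ∫ x, ψ x * divergence V x
      = ∑ i, ∫ x, ψ x * fderiv ℝ (fun y => V y i) x (e i) := by
        rw [← integral_finsetSum _ fun i _ => hint_left i]
        simp_rw [divergence_eq_sum_fderiv_apply (hV.differentiable one_ne_zero _), Finset.mul_sum]
    _ = -∫ x, fderiv ℝ ψ x (V x) := by
        rw [Finset.sum_congr rfl fun i _ => hcoord i, Finset.sum_neg_distrib,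
          ← integral_finsetSum _ fun i _ => hint_right i]
        simp_rw [← EuclideanSpace.clm_apply_eq_sum]

theorem integral_mul_divergence_sub_inner_gradient {U φ : EuclideanSpace ℝ ι → ℝ}
    {V : EuclideanSpace ℝ ι → EuclideanSpace ℝ ι} (hU : ContDiff ℝ 1 U) (hφ : ContDiff ℝ 1 φ)
    (hφc : HasCompactSupport φ) (hV : ContDiff ℝ 1 V) :
    ∫ x, φ x * (divergence V x - ⟪gradient U x, V x⟫)
        ∂volume.withDensity (fun x => ENNReal.ofReal (Real.exp (-U x)))
      = -∫ x, fderiv ℝ φ x (V x)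
        ∂volume.withDensity (fun x => ENNReal.ofReal (Real.exp (-U x))) := by
  simp only [integral_withDensity_exp_neg hU.continuous.measurable]
  set w : EuclideanSpace ℝ ι → ℝ := fun x => Real.exp (-U x)
  have hw : ContDiff ℝ 1 w := Real.contDiff_exp.comp hU.neg
  have hgU : Continuous (gradient U) := (hU.gradient (m := 0) (by simp)).continuous
  have hfderiv_w (x : EuclideanSpace ℝ ι) : fderiv ℝ w x = -(w x • fderiv ℝ U x) :=
    ((hU.differentiable one_ne_zero x).hasFDerivAt.neg.exp).fderiv.trans (smul_neg _ _)
  have hfderiv_φw (x : EuclideanSpace ℝ ι) :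
      fderiv ℝ (fun y => φ y * w y) x (V x)
        = w x * fderiv ℝ φ x (V x) - φ x * w x * ⟪gradient U x, V x⟫ := by
    rw [fderiv_fun_mul (hφ.differentiable one_ne_zero x) (hw.differentiable one_ne_zero x),
      hfderiv_w]
    simp only [smul_neg, add_apply, neg_apply, smul_apply, smul_eq_mul, inner_gradient_left]
    ring
  have hint_div : Integrable fun x => φ x * w x * divergence V x :=
    ((hφ.continuous.mul hw.continuous).mul
      (continuous_divergence hV)).integrable_of_hasCompactSupport hφc.mul_right.mul_right
  have hint_inner : Integrable fun x => φ x * w x * ⟪gradient U x, V x⟫ :=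
    ((hφ.continuous.mul hw.continuous).mul
      (hgU.inner hV.continuous)).integrable_of_hasCompactSupport hφc.mul_right.mul_right
  have hint_fderiv : Integrable fun x => w x * fderiv ℝ φ x (V x) :=
    (hw.continuous.mul ((hφ.continuous_fderiv one_ne_zero).clm_apply
      hV.continuous)).integrable_of_hasCompactSupport
        ((hφc.fderiv ℝ).mono fun x hx h => hx (by simp [h])).mul_left
  calc ∫ x, w x * (φ x * (divergence V x - ⟪gradient U x, V x⟫))
      = (∫ x, φ x * w x * divergence V x) - ∫ x, φ x * w x * ⟪gradient U x, V x⟫ := by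
        rw [← integral_sub hint_div hint_inner]
        congr 1 with x
        ring
    _ = -(∫ x, fderiv ℝ (fun y => φ y * w y) x (V x))
          - ∫ x, φ x * w x * ⟪gradient U x, V x⟫ := by
        rw [integral_mul_divergence_eq_neg (hφ.mul hw) hφc.mul_right hV]
    _ = -∫ x, w x * fderiv ℝ φ x (V x) := by
        simp only [hfderiv_φw]
        rw [integral_sub hint_fderiv hint_inner]
        ring

end Divergence

section Cutoff

variable {E : Type*} [NormedAddCommGroup E] [NormedSpace ℝ E] [FiniteDimensional ℝ E]

noncomputable def unitBump : ContDiffBump (0 : E) := ⟨1, 2, one_pos, one_lt_two⟩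

noncomputable def cutoff (n : ℕ) (x : E) : ℝ :=
  (unitBump : ContDiffBump (0 : E)) (((n : ℝ) + 1)⁻¹ • x)

theorem contDiff_cutoff (n : ℕ) {k : ℕ∞} : ContDiff ℝ k (cutoff (E := E) n) :=
  unitBump.contDiff.comp (contDiff_const_smul _)

theorem cutoff_nonneg (n : ℕ) (x : E) : 0 ≤ cutoff n x := unitBump.nonneg

theorem cutoff_le_one (n : ℕ) (x : E) : cutoff n x ≤ 1 := unitBump.le_one

theorem cutoff_eq_one {n : ℕ} {x : E} (hx : ‖x‖ ≤ n + 1) : cutoff n x = 1 := by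
  apply unitBump.one_of_mem_closedBall
  rw [Metric.mem_closedBall, dist_zero_right, norm_smul, Real.norm_of_nonneg (by positivity)]
  exact inv_mul_le_one_of_le₀ hx (by positivity)

theorem hasCompactSupport_cutoff (n : ℕ) : HasCompactSupport (cutoff (E := E) n) :=
  unitBump.hasCompactSupport.comp_smul (inv_ne_zero (by positivity))

theorem exists_norm_fderiv_cutoff_le :
    ∃ C, ∀ (n : ℕ) (x : E), ‖fderiv ℝ (cutoff n) x‖ ≤ C * ((n : ℝ) + 1)⁻¹ := by
  obtain ⟨C, hC⟩ := ((unitBump : ContDiffBump (0 : E)).contDiff.continuous_fderiv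
    one_ne_zero).bounded_above_of_compact_support (unitBump.hasCompactSupport.fderiv ℝ)
  refine ⟨C, fun n x => ?_⟩
  unfold cutoff
  rw [fderiv_comp_smul, norm_smul, Real.norm_of_nonneg (by positivity), mul_comm]
  exact mul_le_mul_of_nonneg_right (hC _) (by positivity)

variable [MeasurableSpace E]

theorem tendsto_integral_cutoff_mul [BorelSpace E] {μ : Measure E} {F : E → ℝ}
    (hF : Integrable F μ) :
    Tendsto (fun n => ∫ x, cutoff n x * F x ∂μ) atTop (𝓝 (∫ x, F x ∂μ)) := by
  refine tendsto_integral_of_dominated_convergence (fun x => ‖F x‖)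
    (fun n => ((contDiff_cutoff n (k := 0)).continuous.aestronglyMeasurable.mul hF.1)) hF.norm
    (fun n => ae_of_all _ fun x => ?_) (ae_of_all _ fun x => ?_)
  · rw [norm_mul, Real.norm_of_nonneg (cutoff_nonneg n x)]
    exact mul_le_of_le_one_left (norm_nonneg _) (cutoff_le_one n x)
  · refine tendsto_const_nhds.congr' ?_
    filter_upwards [eventually_ge_atTop ⌈‖x‖⌉₊] with n hn
    rw [cutoff_eq_one, one_mul]
    have := (Nat.le_ceil ‖x‖).trans (Nat.cast_le.mpr hn)
    linarith

theorem tendsto_integral_fderiv_cutoff {μ : Measure E} {V : E → E} (hV : Integrable V μ) :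
    Tendsto (fun n => ∫ x, fderiv ℝ (cutoff n) x (V x) ∂μ) atTop (𝓝 0) := by
  obtain ⟨C, hC⟩ := exists_norm_fderiv_cutoff_le (E := E)
  have hbound (n : ℕ) :
      ‖∫ x, fderiv ℝ (cutoff n) x (V x) ∂μ‖ ≤ C * ((n : ℝ) + 1)⁻¹ * ∫ x, ‖V x‖ ∂μ := by
    rw [← integral_const_mul]
    refine norm_integral_le_of_norm_le (hV.norm.const_mul _) (ae_of_all _ fun x => ?_)
    exact ((fderiv ℝ (cutoff n) x).le_opNorm (V x)).trans
      (mul_le_mul_of_nonneg_right (hC n x) (norm_nonneg _))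
  refine squeeze_zero_norm hbound ?_
  simpa using ((tendsto_one_div_add_atTop_nhds_zero_nat.const_mul C).mul_const (∫ x, ‖V x‖ ∂μ))

theorem integral_eq_zero_of_forall_integral_mul_eq_neg_fderiv [BorelSpace E] {μ : Measure E}
    {F : E → ℝ} {V : E → E} (hF : Integrable F μ) (hV : Integrable V μ)
    (h : ∀ φ : E → ℝ, ContDiff ℝ 1 φ → HasCompactSupport φ →
      ∫ x, φ x * F x ∂μ = -∫ x, fderiv ℝ φ x (V x) ∂μ) :
    ∫ x, F x ∂μ = 0 := by
  refine tendsto_nhds_unique (tendsto_integral_cutoff_mul hF) ?_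
  simpa [h _ (contDiff_cutoff _) (hasCompactSupport_cutoff _)] using
    (tendsto_integral_fderiv_cutoff hV).neg

end Cutoff

theorem recipChar_sub_recipChar {d : ℕ} {U₁ U₂ : Euc d → ℝ} {x : Euc d}
    (h₁ : DifferentiableAt ℝ (gradient U₁) x) (h₂ : DifferentiableAt ℝ (gradient U₂) x) :
    recipChar U₂ x - recipChar U₁ x
      = -(1 / 4) * (divergence (gradient U₂ - gradient U₁) x
          - ⟪gradient U₂ x, (gradient U₂ - gradient U₁) x⟫)
        - (1 / 8) * ‖gradient U₁ x - gradient U₂ x‖ ^ 2 := by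
  rw [recipChar, recipChar, lap_eq_divergence_gradient, lap_eq_divergence_gradient,
    divergence_sub h₂ h₁, Pi.sub_apply, inner_sub_right, real_inner_self_eq_norm_sq,
    norm_sub_sq_real, real_inner_comm]
  ring

/-- Integration-by-parts identity for reciprocal characteristics on `ℝ^d`:
`∫ (𝒰₂ − 𝒰₁) dμ₂ = −(1/8)·I(μ₂|μ₁)` where `I(μ₂|μ₁) = ∫‖∇U₁ − ∇U₂‖² dμ₂`. -/
theorem stmt13 (d : ℕ) (U₁ U₂ : Euc d → ℝ)
    (hU₁ : ContDiff ℝ 2 U₁) (hU₂ : ContDiff ℝ 2 U₂)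
    (μ₂ : Measure (Euc d))
    (hμ₂ : μ₂ = volume.withDensity fun x => ENNReal.ofReal (Real.exp (-U₂ x)))
    [IsProbabilityMeasure μ₂]
    (hFI : Integrable (fun x => ‖gradient U₁ x - gradient U₂ x‖ ^ 2) μ₂)
    (hL1 : Integrable (fun x => recipChar U₂ x - recipChar U₁ x) μ₂) :
    ∫ x, (recipChar U₂ x - recipChar U₁ x) ∂μ₂
      = -(1 / 8) * ∫ x, ‖gradient U₁ x - gradient U₂ x‖ ^ 2 ∂μ₂ := by
  set V := gradient U₂ - gradient U₁
  set F := fun x => divergence V x - ⟪gradient U₂ x, V x⟫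
  have hg₁ : ContDiff ℝ 1 (gradient U₁) := hU₁.gradient le_rfl
  have hg₂ : ContDiff ℝ 1 (gradient U₂) := hU₂.gradient le_rfl
  have hpointwise (x : Euc d) : recipChar U₂ x - recipChar U₁ x
      = -(1 / 4) * F x - (1 / 8) * ‖gradient U₁ x - gradient U₂ x‖ ^ 2 :=
    recipChar_sub_recipChar (hg₁.differentiable one_ne_zero x) (hg₂.differentiable one_ne_zero x)
  have hF : Integrable F μ₂ := by
    refine ((hL1.const_mul (-4)).sub (hFI.const_mul (1 / 2))).congr (ae_of_all _ fun x => ?_)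
    simp only [Pi.sub_apply, hpointwise]
    ring
  have hV : Integrable V μ₂ := by
    refine ((memLp_two_iff_integrable_sq_norm
      (hg₂.continuous.sub hg₁.continuous).aestronglyMeasurable).2 ?_).integrable one_le_two
    simpa [V, norm_sub_rev] using hFI
  have hF_zero : ∫ x, F x ∂μ₂ = 0 :=
    integral_eq_zero_of_forall_integral_mul_eq_neg_fderiv hF hV fun φ hφ hφc => by
      subst hμ₂
      exact integral_mul_divergence_sub_inner_gradient (hU₂.of_le one_le_two) hφ hφc (hg₂.sub hg₁)
  rw [integral_congr_ae (ae_of_all _ hpointwise),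
    integral_sub (hF.const_mul _) (hFI.const_mul _), integral_const_mul, integral_const_mul,
    hF_zero]
  ring
end

section
/- Let φ: ℝ → ℝ be C³ with α ≤ φ''(x) ≤ β for all x and some constants 0 < α ≤ β, and let μ = e^{-f}·Leb be a probability measure on ℝ with f ∈ C¹(ℝ). For t ∈ [0,1] set T_t'(x) := 1 + t(φ''(x) − 1). Assume ∫ (f')²/φ'' dμ, ∫ |f' φ'''|/(φ'')² dμ, and ∫ (φ''')²/(φ'')³ dμ are all finite. Then ∫₀¹ ∫ ( (f'(x) + t·φ'''(x)/T_t'(x)) / T_t'(x) )² dμ(x) dt = ∫ [ (f'(x))²/φ''(x) + f'(x)φ'''(x)/(φ''(x))² + (1/3)·(φ'''(x))²/(φ''(x))³ ] dμ(x). -/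
/-!
Writing `D t = 1 + t (g - 1)`, one has `d/dt (t / D t) = 1 / D t ^ 2`, so the substitution
`s = t / D t` turns the inner integrand `((A + t c / D) / D) ^ 2` into
`(A + c s) ^ 2 ds`, with `s` running from `0` to `1 / g`. This gives, pointwise in `x`,
`∫₀¹ ((A + t c / D) / D) ^ 2 dt = A² / g + A c / g² + c² / (3 g³)`. The integrand is nonnegative,
so integrability of this closed form makes it integrable on `[0, 1] × ℝ` (Tonelli), and Fubini
finishes the proof.
-/

open MeasureTheory Set

/-- With `A = f'(x)`, `g = φ''(x)`, `c = φ'''(x)`, this is `(f_t'(T_t x)) ^ 2`. -/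
noncomputable def interpolatedScoreSq (A c g t : ℝ) : ℝ :=
  ((A + t * c / (1 + t * (g - 1))) / (1 + t * (g - 1))) ^ 2

lemma one_add_mul_sub_one_pos {g t : ℝ} (hg : 0 < g) (ht : t ∈ Icc (0 : ℝ) 1) :
    0 < 1 + t * (g - 1) := by
  nlinarith [ht.1, ht.2, mul_nonneg ht.1 hg.le]

lemma hasDerivAt_div_one_add_mul {k t : ℝ} (h : 1 + t * k ≠ 0) :
    HasDerivAt (fun s => s / (1 + s * k)) (1 / (1 + t * k) ^ 2) t := by
  have hD : HasDerivAt (fun s => 1 + s * k) k t := by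
    simpa using ((hasDerivAt_id' t).mul_const k).const_add 1
  exact ((hasDerivAt_id' t).div hD h).congr_deriv (by ring)

lemma continuousOn_interpolatedScoreSq (A c : ℝ) {g : ℝ} (hg : 0 < g) :
    ContinuousOn (interpolatedScoreSq A c g) (Icc 0 1) := by
  have hD : ∀ t ∈ Icc (0 : ℝ) 1, 1 + t * (g - 1) ≠ 0 :=
    fun t ht => (one_add_mul_sub_one_pos hg ht).ne'
  unfold interpolatedScoreSq
  exact ((continuousOn_const.add ((continuousOn_id.mul continuousOn_const).div
    (by fun_prop) hD)).div (by fun_prop) hD).pow 2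

lemma integral_interpolatedScoreSq (A c : ℝ) {g : ℝ} (hg : 0 < g) :
    ∫ t in (0 : ℝ)..1, interpolatedScoreSq A c g t
      = A ^ 2 / g + A * c / g ^ 2 + 1 / 3 * c ^ 2 / g ^ 3 := by
  set P : ℝ → ℝ := fun s => A ^ 2 * s + A * c * s ^ 2 + c ^ 2 * s ^ 3 / 3
  have hP : ∀ s, HasDerivAt P ((A + c * s) ^ 2) s := by
    intro s
    have h := (((hasDerivAt_id' s).const_mul (A ^ 2)).add
      (((hasDerivAt_id' s).pow 2).const_mul (A * c))).add
      ((((hasDerivAt_id' s).pow 3).const_mul (c ^ 2)).div_const 3)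
    exact h.congr_deriv (by push_cast; ring)
  have hderiv : ∀ t ∈ uIcc (0 : ℝ) 1, HasDerivAt (fun t => P (t / (1 + t * (g - 1))))
      (interpolatedScoreSq A c g t) t := by
    intro t ht
    rw [uIcc_of_le zero_le_one] at ht
    have hD := (one_add_mul_sub_one_pos hg ht).ne'
    refine ((hP _).comp t (hasDerivAt_div_one_add_mul hD)).congr_deriv ?_
    rw [interpolatedScoreSq]
    field_simp
  rw [intervalIntegral.integral_eq_sub_of_hasDerivAt hderiv
    ((continuousOn_interpolatedScoreSq A c hg).mono (uIcc_of_le zero_le_one).subset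
      |>.intervalIntegrable)]
  simp only [P]
  norm_num
  ring

theorem integral_integral_interpolatedScoreSq {α : Type*} [MeasurableSpace α] {μ : Measure α}
    [SFinite μ] {A c g : α → ℝ} (hA : Measurable A) (hc : Measurable c) (hg : Measurable g)
    (hg0 : ∀ x, 0 < g x)
    (hR : Integrable (fun x => A x ^ 2 / g x + A x * c x / g x ^ 2 + 1 / 3 * c x ^ 2 / g x ^ 3) μ) :
    ∫ t in (0 : ℝ)..1, ∫ x, interpolatedScoreSq (A x) (c x) (g x) t ∂μ
      = ∫ x, (A x ^ 2 / g x + A x * c x / g x ^ 2 + 1 / 3 * c x ^ 2 / g x ^ 3) ∂μ := by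
  have hsection : ∀ x, ∫ t in Ioc (0 : ℝ) 1, interpolatedScoreSq (A x) (c x) (g x) t
      = A x ^ 2 / g x + A x * c x / g x ^ 2 + 1 / 3 * c x ^ 2 / g x ^ 3 := fun x => by
    rw [← intervalIntegral.integral_of_le zero_le_one]
    exact integral_interpolatedScoreSq (A x) (c x) (hg0 x)
  have hmeas : Measurable (Function.uncurry fun t x => interpolatedScoreSq (A x) (c x) (g x) t) := by
    unfold Function.uncurry interpolatedScoreSq
    fun_prop
  have hint : Integrable (Function.uncurry fun t x => interpolatedScoreSq (A x) (c x) (g x) t)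
      ((volume.restrict (Ioc (0 : ℝ) 1)).prod μ) := by
    refine (integrable_prod_iff' hmeas.aestronglyMeasurable).2 ⟨ae_of_all _ fun x => ?_, ?_⟩
    · exact ((continuousOn_interpolatedScoreSq (A x) (c x) (hg0 x)).integrableOn_Icc).mono_set
        Ioc_subset_Icc_self
    · refine hR.congr (ae_of_all _ fun x => ?_)
      simp only [Function.uncurry_apply_pair, Real.norm_eq_abs, interpolatedScoreSq, abs_sq]
      exact (hsection x).symm
  rw [intervalIntegral.integral_of_le zero_le_one, integral_integral_swap hint]
  exact integral_congr_ae (ae_of_all _ hsection)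

theorem stmt15_general (φ : ℝ → ℝ)
    (a b : ℝ) (ha : 0 < a)
    (hbound : ∀ x, a ≤ deriv (deriv φ) x ∧ deriv (deriv φ) x ≤ b)
    (f : ℝ → ℝ)
    (μ : Measure ℝ)
    [IsProbabilityMeasure μ]
    (h1 : Integrable (fun x => (deriv f x) ^ 2 / deriv (deriv φ) x) μ)
    (h2 : Integrable
      (fun x => |deriv f x * deriv (deriv (deriv φ)) x| / (deriv (deriv φ) x) ^ 2) μ)
    (h3 : Integrable
      (fun x => (deriv (deriv (deriv φ)) x) ^ 2 / (deriv (deriv φ) x) ^ 3) μ) :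
    (∫ t in (0:ℝ)..1, ∫ x,
        ((deriv f x + t * deriv (deriv (deriv φ)) x / (1 + t * (deriv (deriv φ) x - 1)))
            / (1 + t * (deriv (deriv φ) x - 1))) ^ 2 ∂μ)
      = ∫ x, ((deriv f x) ^ 2 / deriv (deriv φ) x
          + deriv f x * deriv (deriv (deriv φ)) x / (deriv (deriv φ) x) ^ 2
          + (1 / 3) * (deriv (deriv (deriv φ)) x) ^ 2 / (deriv (deriv φ) x) ^ 3) ∂μ := by
  have hg0 : ∀ x, 0 < deriv (deriv φ) x := fun x => ha.trans_le (hbound x).1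
  have hf' := measurable_deriv f
  have hφ'' := measurable_deriv (deriv φ)
  have hφ''' := measurable_deriv (deriv (deriv φ))
  have hcross : Integrable
      (fun x => deriv f x * deriv (deriv (deriv φ)) x / (deriv (deriv φ) x) ^ 2) μ := by
    refine (integrable_norm_iff (Measurable.aestronglyMeasurable (by fun_prop))).1
      (h2.congr (ae_of_all _ fun x => ?_))
    beta_reduce
    rw [Real.norm_eq_abs, abs_div, abs_of_pos (pow_pos (hg0 x) 2)]
  have h3' := h3.const_mul (1 / 3)
  simp only [← mul_div_assoc] at h3'
  exact integral_integral_interpolatedScoreSq hf' hφ''' hφ'' hg0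
    ((h1.add hcross).add h3')

/-- One-dimensional integrated Fisher information along the McCann interpolation for the
Brenier potential `φ`: with `T_t'(x) = 1 + t(φ''(x) − 1)`,
`∫₀¹ ∫ ((f' + tφ'''/T_t')/T_t')² dμ dt
  = ∫ [ (f')²/φ'' + f'φ'''/(φ'')² + (1/3)(φ''')²/(φ'')³ ] dμ`. -/
theorem stmt15 (φ : ℝ → ℝ) (hφ : ContDiff ℝ 3 φ)
    (a b : ℝ) (ha : 0 < a) (hab : a ≤ b)
    (hbound : ∀ x, a ≤ deriv (deriv φ) x ∧ deriv (deriv φ) x ≤ b)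
    (f : ℝ → ℝ) (hf : ContDiff ℝ 1 f)
    (μ : Measure ℝ)
    (hμ : μ = volume.withDensity fun x => ENNReal.ofReal (Real.exp (-f x)))
    [IsProbabilityMeasure μ]
    (h1 : Integrable (fun x => (deriv f x) ^ 2 / deriv (deriv φ) x) μ)
    (h2 : Integrable
      (fun x => |deriv f x * deriv (deriv (deriv φ)) x| / (deriv (deriv φ) x) ^ 2) μ)
    (h3 : Integrable
      (fun x => (deriv (deriv (deriv φ)) x) ^ 2 / (deriv (deriv φ) x) ^ 3) μ) :
    (∫ t in (0:ℝ)..1, ∫ x,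
        ((deriv f x + t * deriv (deriv (deriv φ)) x / (1 + t * (deriv (deriv φ) x - 1)))
            / (1 + t * (deriv (deriv φ) x - 1))) ^ 2 ∂μ)
      = ∫ x, ((deriv f x) ^ 2 / deriv (deriv φ) x
          + deriv f x * deriv (deriv (deriv φ)) x / (deriv (deriv φ) x) ^ 2
          + (1 / 3) * (deriv (deriv (deriv φ)) x) ^ 2 / (deriv (deriv φ) x) ^ 3) ∂μ :=
  stmt15_general φ a b ha hbound f μ h1 h2 h3
end
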